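/- arXiv:2311.13597 — 7 statements merged into one kernel-verified Lean document; each statement's English description precedes it below -/
import Mathlib

section
/- For odd coprime positive integers m and n, the Jacobi symbols satisfy (m/n) = (-1)^{((m-1)/2)·((n-1)/2)} · (n/m). (Quadratic reciprocity deduced via the transposition bijection on domino tilings: if ρ: D(R_{m-1,n-1}) → D(R_{n-1,m-1}) is the transposition bijection, then h(ρ(D)) = (m-1)(n-1)/2 - h(D).) -/
theorem stmt1 (m n : ℕ) (hm : 0 < m) (hn : 0 < n) (hmo : Odd m) (hno : Odd n)
    (hco : Nat.Coprime m n) :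
    jacobiSym (m : ℤ) n = (-1) ^ (((m - 1) / 2) * ((n - 1) / 2)) * jacobiSym (n : ℤ) m := by
  have h1 : (m - 1) / 2 = m / 2 := by obtain ⟨k, hk⟩ := hmo; obtain ⟨l, hl⟩ := hno; omega
  have h2 : (n - 1) / 2 = n / 2 := by obtain ⟨k, hk⟩ := hmo; obtain ⟨l, hl⟩ := hno; omega
  rw [h1, h2, jacobiSym.quadratic_reciprocity hmo hno]
end

section
/- Let m be a positive integer and n a positive even integer. Then any domino tiling of the m×n rectangle R_{m,n} can be transformed into the totally vertical tiling by a finite sequence of flips. -/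
/-!
Thurston's height function. Walking along the edges of the lattice, the height changes by `1`
along an edge that no domino crosses and by `-3` along a crossed one, with signs alternating
like the checkerboard colour of the cell on the left. Around every cell these changes cancel, so
each tiling gets a height on the lattice points of the rectangle; all tilings have the same height
on the boundary, the height determines the tiling, and heights of two tilings agree mod 4.

If `D ≠ E`, say `h_D > h_E` somewhere; a point where `h_D` is largest among those is an interior
strict local maximum of `h_D`. There the 2×2 square around it is covered by two parallel dominoes,
and flipping them lowers `h_D` by 4 at that point only, so `∑ |h_D - h_E|` decreases. Hence any
two tilings are connected by flips, in particular any tiling and the totally vertical one, which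
exists because `n` is even.
-/

open Finset

attribute [local instance] Classical.propDecidable

/-- A domino `{(i,j),(i+1,j)}` is horizontal. -/
def Horiz (d : Finset (ℤ × ℤ)) : Prop := ∃ i j : ℤ, d = {(i, j), (i + 1, j)}

/-- A domino `{(i,j),(i,j+1)}` is vertical. -/
def Vert (d : Finset (ℤ × ℤ)) : Prop := ∃ i j : ℤ, d = {(i, j), (i, j + 1)}

/-- `D` is a domino tiling of the board `X`. -/
def IsTiling (X : Finset (ℤ × ℤ)) (D : Finset (Finset (ℤ × ℤ))) : Prop :=
  (∀ d ∈ D, Horiz d ∨ Vert d) ∧ (∀ d ∈ D, d ⊆ X) ∧ ∀ p ∈ X, ∃! d, d ∈ D ∧ p ∈ d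

/-- The finite set of all domino tilings of a board `X`. -/
noncomputable def tilings (X : Finset (ℤ × ℤ)) : Finset (Finset (Finset (ℤ × ℤ))) :=
  X.powerset.powerset.filter (IsTiling X)

/-- The number of horizontal dominoes in a tiling. -/
noncomputable def hcount (D : Finset (Finset (ℤ × ℤ))) : ℕ := (D.filter Horiz).card

/-- `S(X) = ∑_{D ∈ D(X)} i^{h(D)}`. -/
noncomputable def Scomp (X : Finset (ℤ × ℤ)) : ℂ :=
  ∑ D ∈ tilings X, Complex.I ^ hcount D

/-- The rectangle `[1,a] × [1,b]` in `ℤ × ℤ`. -/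
noncomputable def rect (a b : ℤ) : Finset (ℤ × ℤ) := Finset.Icc 1 a ×ˢ Finset.Icc 1 b

/-- `D'` is obtained from `D` by a single flip of a 2×2 square. -/
def Flip (D D' : Finset (Finset (ℤ × ℤ))) : Prop :=
  ∃ i j : ℤ,
    (({(i, j), (i + 1, j)} ∈ D ∧ {(i, j + 1), (i + 1, j + 1)} ∈ D ∧
        D' = insert {(i, j), (i, j + 1)} (insert {(i + 1, j), (i + 1, j + 1)}
          ((D.erase {(i, j), (i + 1, j)}).erase {(i, j + 1), (i + 1, j + 1)}))) ∨
      ({(i, j), (i, j + 1)} ∈ D ∧ {(i + 1, j), (i + 1, j + 1)} ∈ D ∧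
        D' = insert {(i, j), (i + 1, j)} (insert {(i, j + 1), (i + 1, j + 1)}
          ((D.erase {(i, j), (i, j + 1)}).erase {(i + 1, j), (i + 1, j + 1)}))))

abbrev vDomino (i j : ℤ) : Finset (ℤ × ℤ) := {(i, j), (i, j + 1)}

abbrev hDomino (i j : ℤ) : Finset (ℤ × ℤ) := {(i, j), (i + 1, j)}

theorem vDomino_inj {i j k l : ℤ} : vDomino i j = vDomino k l ↔ i = k ∧ j = l := by
  refine ⟨fun h => ?_, fun ⟨hi, hj⟩ => hi ▸ hj ▸ rfl⟩
  have h₁ : (i, j) ∈ vDomino k l := h ▸ by simp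
  have h₂ : (i, j + 1) ∈ vDomino k l := h ▸ by simp
  simp only [mem_insert, mem_singleton, Prod.mk.injEq] at h₁ h₂
  omega

theorem hDomino_inj {i j k l : ℤ} : hDomino i j = hDomino k l ↔ i = k ∧ j = l := by
  refine ⟨fun h => ?_, fun ⟨hi, hj⟩ => hi ▸ hj ▸ rfl⟩
  have h₁ : (i, j) ∈ hDomino k l := h ▸ by simp
  have h₂ : (i + 1, j) ∈ hDomino k l := h ▸ by simp
  simp only [mem_insert, mem_singleton, Prod.mk.injEq] at h₁ h₂
  omega

theorem vDomino_ne_hDomino (i j k l : ℤ) : vDomino i j ≠ hDomino k l := by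
  intro h
  have h₁ : (i, j) ∈ hDomino k l := h ▸ by simp
  have h₂ : (i, j + 1) ∈ hDomino k l := h ▸ by simp
  simp only [mem_insert, mem_singleton, Prod.mk.injEq] at h₁ h₂
  omega

theorem eq_of_mem_of_horiz_or_vert {d : Finset (ℤ × ℤ)} {i j : ℤ} (hd : Horiz d ∨ Vert d)
    (hij : (i, j) ∈ d) :
    d = vDomino i (j - 1) ∨ d = vDomino i j ∨ d = hDomino (i - 1) j ∨ d = hDomino i j := by
  rcases hd with ⟨k, l, rfl⟩ | ⟨k, l, rfl⟩ <;>
    simp only [mem_insert, mem_singleton, Prod.mk.injEq] at hij <;>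
    rcases hij with ⟨rfl, rfl⟩ | ⟨rfl, rfl⟩ <;> simp

theorem mem_rect {a b : ℤ} {p : ℤ × ℤ} :
    p ∈ rect a b ↔ 1 ≤ p.1 ∧ p.1 ≤ a ∧ 1 ≤ p.2 ∧ p.2 ≤ b := by
  simp [rect, and_assoc]

section Tiling

variable {X : Finset (ℤ × ℤ)} {D : Finset (Finset (ℤ × ℤ))}

theorem IsTiling.eq_of_mem {d d' : Finset (ℤ × ℤ)} {p : ℤ × ℤ} (hD : IsTiling X D)
    (hd : d ∈ D) (hd' : d' ∈ D) (hp : p ∈ d) (hp' : p ∈ d') : d = d' :=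
  (hD.2.2 p (hD.2.1 d hd hp)).unique ⟨hd, hp⟩ ⟨hd', hp'⟩

theorem IsTiling.not_mem {d : Finset (ℤ × ℤ)} {p : ℤ × ℤ} (hD : IsTiling X D) (hp : p ∈ d)
    (hpX : p ∉ X) : d ∉ D :=
  fun hd => hpX (hD.2.1 d hd hp)

def replacePair (D : Finset (Finset (ℤ × ℤ))) (p₁ p₂ q₁ q₂ : Finset (ℤ × ℤ)) :
    Finset (Finset (ℤ × ℤ)) :=
  insert q₁ (insert q₂ ((D.erase p₁).erase p₂))

theorem mem_replacePair {p₁ p₂ q₁ q₂ d : Finset (ℤ × ℤ)} :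
    d ∈ replacePair D p₁ p₂ q₁ q₂ ↔ d = q₁ ∨ d = q₂ ∨ (d ∈ D ∧ d ≠ p₁ ∧ d ≠ p₂) := by
  simp only [replacePair, mem_insert, mem_erase]
  tauto

theorem mem_replacePair_of_ne {p₁ p₂ q₁ q₂ d : Finset (ℤ × ℤ)} (h₁ : d ≠ p₁) (h₂ : d ≠ p₂)
    (h₃ : d ≠ q₁) (h₄ : d ≠ q₂) : d ∈ replacePair D p₁ p₂ q₁ q₂ ↔ d ∈ D := by
  simp [mem_replacePair, *]

theorem IsTiling.isTiling_replacePair {p₁ p₂ q₁ q₂ : Finset (ℤ × ℤ)} (hD : IsTiling X D)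
    (hp₁ : p₁ ∈ D) (hp₂ : p₂ ∈ D) (hq₁ : Horiz q₁ ∨ Vert q₁) (hq₂ : Horiz q₂ ∨ Vert q₂)
    (hunion : q₁ ∪ q₂ = p₁ ∪ p₂) (hdisj : Disjoint q₁ q₂) :
    IsTiling X (replacePair D p₁ p₂ q₁ q₂) := by
  have hsub : q₁ ∪ q₂ ⊆ X := hunion ▸ union_subset (hD.2.1 _ hp₁) (hD.2.1 _ hp₂)
  have hkept : ∀ d ∈ D, d ≠ p₁ → d ≠ p₂ → ∀ p ∈ d, p ∉ q₁ ∪ q₂ := by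
    intro d hd h₁ h₂ p hp hq
    rw [hunion, mem_union] at hq
    exact hq.elim (fun h => h₁ (hD.eq_of_mem hd hp₁ hp h))
      (fun h => h₂ (hD.eq_of_mem hd hp₂ hp h))
  refine ⟨fun d hd => ?_, fun d hd => ?_, fun p hp => ?_⟩
  · rcases mem_replacePair.1 hd with rfl | rfl | ⟨hd, -⟩
    exacts [hq₁, hq₂, hD.1 d hd]
  · rcases mem_replacePair.1 hd with rfl | rfl | ⟨hd, -⟩
    exacts [subset_union_left.trans hsub, subset_union_right.trans hsub, hD.2.1 d hd]
  have hunique : ∀ d ∈ replacePair D p₁ p₂ q₁ q₂, ∀ d' ∈ replacePair D p₁ p₂ q₁ q₂,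
      p ∈ d → p ∈ d' → d = d' := by
    intro d hdR d' hdR' hp hp'
    rcases mem_replacePair.1 hdR with rfl | rfl | ⟨hd, hd₁, hd₂⟩ <;>
      rcases mem_replacePair.1 hdR' with rfl | rfl | ⟨hd', hd₁', hd₂'⟩
    all_goals first
      | rfl
      | exact (disjoint_left.1 hdisj hp hp').elim
      | exact (disjoint_left.1 hdisj hp' hp).elim
      | exact hD.eq_of_mem hd hd' hp hp'
      | exact (hkept _ hd hd₁ hd₂ p hp (mem_union_left _ hp')).elim
      | exact (hkept _ hd hd₁ hd₂ p hp (mem_union_right _ hp')).elim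
      | exact (hkept _ hd' hd₁' hd₂' p hp' (mem_union_left _ hp)).elim
      | exact (hkept _ hd' hd₁' hd₂' p hp' (mem_union_right _ hp)).elim
  obtain ⟨d, hd, hpd⟩ : ∃ d ∈ replacePair D p₁ p₂ q₁ q₂, p ∈ d := by
    by_cases hpq : p ∈ q₁ ∪ q₂
    · rcases mem_union.1 hpq with hq | hq
      exacts [⟨q₁, mem_replacePair.2 (Or.inl rfl), hq⟩,
        ⟨q₂, mem_replacePair.2 (Or.inr (Or.inl rfl)), hq⟩]
    · obtain ⟨d, ⟨hd, hpd⟩, -⟩ := hD.2.2 p hp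
      refine ⟨d, mem_replacePair.2 (Or.inr (Or.inr ⟨hd, ?_, ?_⟩)), hpd⟩ <;> rintro rfl <;>
        exact hpq (hunion ▸ by simp [hpd])
  exact ⟨d, ⟨hd, hpd⟩, fun d' hd' => hunique _ hd'.1 _ hd hd'.2 hpd⟩

end Tiling

section Flip

variable {X : Finset (ℤ × ℤ)} {D D' : Finset (Finset (ℤ × ℤ))}

theorem vDomino_union_vDomino (i j : ℤ) :
    vDomino i j ∪ vDomino (i + 1) j = hDomino i j ∪ hDomino i (j + 1) := by
  ext p
  simp only [mem_union, mem_insert, mem_singleton]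
  tauto

theorem disjoint_vDomino_vDomino (i j : ℤ) : Disjoint (vDomino i j) (vDomino (i + 1) j) := by
  simp [disjoint_left]

theorem disjoint_hDomino_hDomino (i j : ℤ) : Disjoint (hDomino i j) (hDomino i (j + 1)) := by
  simp [disjoint_left]

theorem replacePair_replacePair {p₁ p₂ q₁ q₂ : Finset (ℤ × ℤ)} (hp₁ : p₁ ∈ D) (hp₂ : p₂ ∈ D)
    (hq₁ : q₁ ∉ D) (hq₂ : q₂ ∉ D) :
    replacePair (replacePair D p₁ p₂ q₁ q₂) q₁ q₂ p₁ p₂ = D := by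
  ext d
  simp only [mem_replacePair]
  constructor
  · rintro (rfl | rfl | ⟨(rfl | rfl | ⟨hd, -⟩), hq₁', hq₂'⟩)
    exacts [hp₁, hp₂, (hq₁' rfl).elim, (hq₂' rfl).elim, hd]
  · intro hd
    by_cases h₁ : d = p₁
    · exact Or.inl h₁
    by_cases h₂ : d = p₂
    · exact Or.inr (Or.inl h₂)
    exact Or.inr (Or.inr ⟨Or.inr (Or.inr ⟨hd, h₁, h₂⟩), fun h => hq₁ (h ▸ hd),
      fun h => hq₂ (h ▸ hd)⟩)

theorem Flip.of_hDomino {i j : ℤ} (h₁ : hDomino i j ∈ D) (h₂ : hDomino i (j + 1) ∈ D) :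
    Flip D (replacePair D (hDomino i j) (hDomino i (j + 1)) (vDomino i j) (vDomino (i + 1) j)) :=
  ⟨i, j, Or.inl ⟨h₁, h₂, rfl⟩⟩

theorem Flip.of_vDomino {i j : ℤ} (h₁ : vDomino i j ∈ D) (h₂ : vDomino (i + 1) j ∈ D) :
    Flip D (replacePair D (vDomino i j) (vDomino (i + 1) j) (hDomino i j) (hDomino i (j + 1))) :=
  ⟨i, j, Or.inr ⟨h₁, h₂, rfl⟩⟩

theorem Flip.isTiling (hD : IsTiling X D) (hF : Flip D D') : IsTiling X D' := by
  obtain ⟨i, j, ⟨h₁, h₂, rfl⟩ | ⟨h₁, h₂, rfl⟩⟩ := hF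
  · exact hD.isTiling_replacePair h₁ h₂ (Or.inr ⟨i, j, rfl⟩) (Or.inr ⟨i + 1, j, rfl⟩)
      (vDomino_union_vDomino i j) (disjoint_vDomino_vDomino i j)
  · exact hD.isTiling_replacePair h₁ h₂ (Or.inl ⟨i, j, rfl⟩) (Or.inl ⟨i, j + 1, rfl⟩)
      (vDomino_union_vDomino i j).symm (disjoint_hDomino_hDomino i j)

theorem Flip.symm (hD : IsTiling X D) (hF : Flip D D') : Flip D' D := by
  obtain ⟨i, j, ⟨h₁, h₂, rfl⟩ | ⟨h₁, h₂, rfl⟩⟩ := hF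
  · have hv₁ : vDomino i j ∉ D := fun h =>
      vDomino_ne_hDomino _ _ _ _ (hD.eq_of_mem (p := (i, j)) h h₁ (by simp) (by simp))
    have hv₂ : vDomino (i + 1) j ∉ D := fun h =>
      vDomino_ne_hDomino _ _ _ _ (hD.eq_of_mem (p := (i + 1, j)) h h₁ (by simp) (by simp))
    have := Flip.of_vDomino
      (D := replacePair D (hDomino i j) (hDomino i (j + 1)) (vDomino i j) (vDomino (i + 1) j))
      (mem_replacePair.2 (Or.inl rfl)) (mem_replacePair.2 (Or.inr (Or.inl rfl)))
    rwa [replacePair_replacePair h₁ h₂ hv₁ hv₂] at this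
  · have hh₁ : hDomino i j ∉ D := fun h =>
      vDomino_ne_hDomino _ _ _ _ (hD.eq_of_mem (p := (i, j)) h₁ h (by simp) (by simp))
    have hh₂ : hDomino i (j + 1) ∉ D := fun h =>
      vDomino_ne_hDomino _ _ _ _ (hD.eq_of_mem (p := (i, j + 1)) h₁ h (by simp) (by simp))
    have := Flip.of_hDomino
      (D := replacePair D (vDomino i j) (vDomino (i + 1) j) (hDomino i j) (hDomino i (j + 1)))
      (mem_replacePair.2 (Or.inl rfl)) (mem_replacePair.2 (Or.inr (Or.inl rfl)))
    rwa [replacePair_replacePair h₁ h₂ hh₁ hh₂] at this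

theorem IsTiling.exists_flip_toggle (hD : IsTiling X D) {i j : ℤ}
    (hsquare : (vDomino i j ∈ D ∧ vDomino (i + 1) j ∈ D) ∨
      (hDomino i j ∈ D ∧ hDomino i (j + 1) ∈ D)) :
    ∃ D', Flip D D' ∧ (vDomino i j ∈ D' ↔ vDomino i j ∉ D) ∧
      (vDomino (i + 1) j ∈ D' ↔ vDomino (i + 1) j ∉ D) ∧
      ∀ d, d ≠ vDomino i j → d ≠ vDomino (i + 1) j → d ≠ hDomino i j → d ≠ hDomino i (j + 1) →
        (d ∈ D' ↔ d ∈ D) := by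
  rcases hsquare with ⟨h₁, h₂⟩ | ⟨h₁, h₂⟩
  · refine ⟨_, Flip.of_vDomino h₁ h₂, ?_, ?_, fun d hd₁ hd₂ hd₃ hd₄ =>
      mem_replacePair_of_ne hd₁ hd₂ hd₃ hd₄⟩ <;>
      simp [mem_replacePair, h₁, h₂, vDomino_ne_hDomino]
  · have hv₁ : vDomino i j ∉ D := fun h =>
      vDomino_ne_hDomino _ _ _ _ (hD.eq_of_mem (p := (i, j)) h h₁ (by simp) (by simp))
    have hv₂ : vDomino (i + 1) j ∉ D := fun h =>
      vDomino_ne_hDomino _ _ _ _ (hD.eq_of_mem (p := (i + 1, j)) h h₁ (by simp) (by simp))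
    refine ⟨_, Flip.of_hDomino h₁ h₂, ?_, ?_, fun d hd₁ hd₂ hd₃ hd₄ =>
      mem_replacePair_of_ne hd₃ hd₄ hd₁ hd₂⟩ <;>
      simp [mem_replacePair, hv₁, hv₂]

end Flip

section Height

variable {X : Finset (ℤ × ℤ)} {D D' E : Finset (Finset (ℤ × ℤ))}

-- The vertex `(a, b)` is the upper-right corner of the cell `(a, b)`, so `vDomino (a + 1) b` is the
-- domino crossing the edge from `(a, b)` to `(a + 1, b)` and `hDomino a (b + 1)` the one crossing
-- the edge from `(a, b)` to `(a, b + 1)`.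
def stepRight (D : Finset (Finset (ℤ × ℤ))) (a b : ℤ) : ℤ :=
  if vDomino (a + 1) b ∈ D then (if (a + b) % 2 = 0 then -3 else 3)
  else (if (a + b) % 2 = 0 then 1 else -1)

def stepUp (D : Finset (Finset (ℤ × ℤ))) (a b : ℤ) : ℤ :=
  if hDomino a (b + 1) ∈ D then (if (a + b) % 2 = 0 then 3 else -3)
  else (if (a + b) % 2 = 0 then -1 else 1)

def thurstonHeight (D : Finset (Finset (ℤ × ℤ))) (x y : ℕ) : ℤ :=
  (∑ t ∈ range y, stepUp D 0 t) + ∑ s ∈ range x, stepRight D s y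

theorem stepRight_cases (D : Finset (Finset (ℤ × ℤ))) (a b : ℤ) :
    stepRight D a b = 1 ∨ stepRight D a b = -1 ∨ stepRight D a b = 3 ∨ stepRight D a b = -3 := by
  unfold stepRight; split_ifs <;> simp

theorem stepUp_cases (D : Finset (Finset (ℤ × ℤ))) (a b : ℤ) :
    stepUp D a b = 1 ∨ stepUp D a b = -1 ∨ stepUp D a b = 3 ∨ stepUp D a b = -3 := by
  unfold stepUp; split_ifs <;> simp

theorem stepRight_congr {a b : ℤ} (h : vDomino (a + 1) b ∈ D' ↔ vDomino (a + 1) b ∈ D) :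
    stepRight D' a b = stepRight D a b := by
  simp only [stepRight, h]

theorem stepUp_congr {a b : ℤ} (h : hDomino a (b + 1) ∈ D' ↔ hDomino a (b + 1) ∈ D) :
    stepUp D' a b = stepUp D a b := by
  simp only [stepUp, h]

theorem four_dvd_thurstonHeight_sub (D E : Finset (Finset (ℤ × ℤ))) (x y : ℕ) :
    4 ∣ thurstonHeight D x y - thurstonHeight E x y := by
  have hright : ∀ a b, (4 : ℤ) ∣ stepRight D a b - stepRight E a b := by
    intro a b; unfold stepRight; split_ifs <;> omega
  have hup : ∀ a b, (4 : ℤ) ∣ stepUp D a b - stepUp E a b := by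
    intro a b; unfold stepUp; split_ifs <;> omega
  rw [thurstonHeight, thurstonHeight, add_sub_add_comm, ← sum_sub_distrib, ← sum_sub_distrib]
  exact dvd_add (dvd_sum fun t _ => hup _ _) (dvd_sum fun s _ => hright _ _)

theorem mem_of_stepRight_eq {a b : ℤ} (h : stepRight D a b = stepRight E a b)
    (hD : vDomino (a + 1) b ∈ D) : vDomino (a + 1) b ∈ E := by
  by_contra hE
  simp only [stepRight, if_pos hD, if_neg hE] at h
  split_ifs at h

theorem mem_of_stepUp_eq {a b : ℤ} (h : stepUp D a b = stepUp E a b)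
    (hD : hDomino a (b + 1) ∈ D) : hDomino a (b + 1) ∈ E := by
  by_contra hE
  simp only [stepUp, if_pos hD, if_neg hE] at h
  split_ifs at h

theorem stepRight_of_toggle_of_pos {a b : ℤ}
    (htoggle : vDomino (a + 1) b ∈ D' ↔ vDomino (a + 1) b ∉ D) (hpos : 0 < stepRight D a b) :
    stepRight D' a b = stepRight D a b - 4 := by
  unfold stepRight at *
  by_cases h : vDomino (a + 1) b ∈ D <;> simp only [h, htoggle] at * <;> split_ifs at * <;> omega

theorem stepRight_of_toggle_of_neg {a b : ℤ}
    (htoggle : vDomino (a + 1) b ∈ D' ↔ vDomino (a + 1) b ∉ D) (hneg : stepRight D a b < 0) :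
    stepRight D' a b = stepRight D a b + 4 := by
  unfold stepRight at *
  by_cases h : vDomino (a + 1) b ∈ D <;> simp only [h, htoggle] at * <;> split_ifs at * <;> omega

theorem thurstonHeight_succ_left (D : Finset (Finset (ℤ × ℤ))) (x y : ℕ) :
    thurstonHeight D (x + 1) y = thurstonHeight D x y + stepRight D x y := by
  rw [thurstonHeight, thurstonHeight, sum_range_succ, add_assoc]

/-- The domino covering the cell `(a + 1, b + 1)` crosses exactly one of the four edges at the
corner `(a, b)` of that cell, so the increments around the cell sum to zero. -/
theorem IsTiling.stepRight_add_stepUp (hD : IsTiling X D) {a b : ℤ} (hc : (a + 1, b + 1) ∈ X) :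
    stepRight D a b + stepUp D (a + 1) b = stepUp D a b + stepRight D a (b + 1) := by
  obtain ⟨d, ⟨hd, hcd⟩, -⟩ := hD.2.2 _ hc
  have hmem : ∀ d' : Finset (ℤ × ℤ), (a + 1, b + 1) ∈ d' → (d' ∈ D ↔ d' = d) :=
    fun d' hc' => ⟨fun hd' => hD.eq_of_mem hd' hd hc' hcd, fun h => h ▸ hd⟩
  simp (disch := simp) only [stepRight, stepUp, hmem]
  rcases eq_of_mem_of_horiz_or_vert (hD.1 d hd) hcd with rfl | rfl | rfl | rfl <;>
    simp [vDomino_inj, hDomino_inj, vDomino_ne_hDomino, (vDomino_ne_hDomino _ _ _ _).symm] <;>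
    split_ifs <;> omega

theorem IsTiling.stepRight_eq {a b : ℤ} {p : ℤ × ℤ} (hD : IsTiling X D) (hE : IsTiling X E)
    (hp : p ∈ vDomino (a + 1) b) (hpX : p ∉ X) : stepRight D a b = stepRight E a b :=
  stepRight_congr (iff_of_false (hD.not_mem hp hpX) (hE.not_mem hp hpX))

theorem IsTiling.stepUp_eq {a b : ℤ} {p : ℤ × ℤ} (hD : IsTiling X D) (hE : IsTiling X E)
    (hp : p ∈ hDomino a (b + 1)) (hpX : p ∉ X) : stepUp D a b = stepUp E a b :=
  stepUp_congr (iff_of_false (hD.not_mem hp hpX) (hE.not_mem hp hpX))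

theorem thurstonHeight_eq_sub_four {x y : ℕ} (hup : ∀ t : ℕ, stepUp D' 0 t = stepUp D 0 t)
    (hleft : stepRight D' x y = stepRight D x y - 4)
    (hright : stepRight D' (x + 1) y = stepRight D (x + 1) y + 4)
    (hother : ∀ s t : ℕ, (s, t) ≠ (x, y) → (s, t) ≠ (x + 1, y) →
      stepRight D' s t = stepRight D s t)
    (x' y' : ℕ) :
    thurstonHeight D' x' y' =
      thurstonHeight D x' y' - if (x', y') = (x + 1, y) then 4 else 0 := by
  induction x' with
  | zero => simp [thurstonHeight, hup]
  | succ x' ih =>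
    rw [thurstonHeight_succ_left, thurstonHeight_succ_left, ih]
    by_cases h₁ : (x', y') = (x, y)
    · obtain ⟨rfl, rfl⟩ := Prod.mk.inj h₁
      simp [hleft, add_sub_assoc]
    by_cases h₂ : (x', y') = (x + 1, y)
    · obtain ⟨rfl, rfl⟩ := Prod.mk.inj h₂
      push_cast
      simp [hright]
    rw [hother _ _ h₁ h₂]
    simp only [Prod.mk.injEq] at h₁ h₂ ⊢
    split_ifs <;> omega

section Rectangle

variable {m n : ℕ}

theorem IsTiling.thurstonHeight_succ_up (hD : IsTiling (rect m n) D) {x y : ℕ} (hx : x ≤ m)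
    (hy : y + 1 ≤ n) : thurstonHeight D x (y + 1) = thurstonHeight D x y + stepUp D x y := by
  induction x with
  | zero => simp [thurstonHeight, sum_range_succ]
  | succ x ih =>
    have hcell := hD.stepRight_add_stepUp (a := x) (b := y)
      (mem_rect.2 (by push_cast; omega))
    rw [thurstonHeight_succ_left, thurstonHeight_succ_left, ih (by omega)]
    push_cast at hcell ⊢
    linarith

theorem IsTiling.thurstonHeight_eq_of_boundary (hD : IsTiling (rect m n) D)
    (hE : IsTiling (rect m n) E) {x y : ℕ} (hx : x ≤ m) (hy : y ≤ n)
    (hb : x = 0 ∨ x = m ∨ y = 0 ∨ y = n) : thurstonHeight D x y = thurstonHeight E x y := by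
  have hleft : ∀ y, ∑ t ∈ range y, stepUp D 0 t = ∑ t ∈ range y, stepUp E 0 t :=
    fun y => sum_congr rfl fun t _ =>
      hD.stepUp_eq hE (p := (0, t + 1)) (by simp) (by simp [mem_rect])
  have hbottom : ∀ s : ℕ, stepRight D s 0 = stepRight E s 0 :=
    fun s => hD.stepRight_eq hE (p := (s + 1, 0)) (by simp) (by simp [mem_rect])
  have htop : ∀ s : ℕ, stepRight D s n = stepRight E s n :=
    fun s => hD.stepRight_eq hE (p := (s + 1, n + 1)) (by simp) (by simp [mem_rect])
  have hright : ∀ t : ℕ, stepUp D m t = stepUp E m t :=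
    fun t => hD.stepUp_eq hE (p := (m + 1, t + 1)) (by simp) (by simp [mem_rect])
  rcases hb with rfl | rfl | rfl | rfl
  · simp [thurstonHeight, hleft]
  · induction y with
    | zero => simp [thurstonHeight, hbottom]
    | succ y ih =>
      rw [hD.thurstonHeight_succ_up le_rfl hy, hE.thurstonHeight_succ_up le_rfl hy, ih (by omega),
        hright]
  · simp [thurstonHeight, hbottom]
  · simp [thurstonHeight, hleft, htop]

theorem IsTiling.subset_of_thurstonHeight_eq (hD : IsTiling (rect m n) D)
    (hE : IsTiling (rect m n) E)
    (h : ∀ x ≤ m, ∀ y ≤ n, thurstonHeight D x y = thurstonHeight E x y) : D ⊆ E := by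
  intro d hd
  have hbound : ∀ i j : ℤ, (i, j) ∈ d → 1 ≤ i ∧ i ≤ m ∧ 1 ≤ j ∧ j ≤ n :=
    fun i j hij => mem_rect.1 (hD.2.1 d hd hij)
  rcases hD.1 d hd with ⟨i, j, rfl⟩ | ⟨i, j, rfl⟩
  · have h₁ := hbound i j (by simp)
    have h₂ := hbound (i + 1) j (by simp)
    obtain ⟨s, rfl⟩ : ∃ s : ℕ, (s : ℤ) = i := ⟨i.toNat, by omega⟩
    obtain ⟨t, rfl⟩ : ∃ t : ℕ, (t : ℤ) + 1 = j := ⟨(j - 1).toNat, by omega⟩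
    refine mem_of_stepUp_eq ?_ hd
    linarith [hD.thurstonHeight_succ_up (x := s) (y := t) (by omega) (by omega),
      hE.thurstonHeight_succ_up (x := s) (y := t) (by omega) (by omega),
      h s (by omega) t (by omega), h s (by omega) (t + 1) (by omega)]
  · have h₁ := hbound i j (by simp)
    have h₂ := hbound i (j + 1) (by simp)
    obtain ⟨s, rfl⟩ : ∃ s : ℕ, (s : ℤ) + 1 = i := ⟨(i - 1).toNat, by omega⟩
    obtain ⟨t, rfl⟩ : ∃ t : ℕ, (t : ℤ) = j := ⟨j.toNat, by omega⟩
    refine mem_of_stepRight_eq ?_ hd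
    linarith [thurstonHeight_succ_left D s t, thurstonHeight_succ_left E s t,
      h s (by omega) t (by omega), h (s + 1) (by omega) t (by omega)]

end Rectangle

theorem IsTiling.exists_flip_lowering (hD : IsTiling X D) {x y : ℕ}
    (hleft : 0 < stepRight D x (y + 1)) (hright : stepRight D (x + 1) (y + 1) < 0)
    (hdown : 0 < stepUp D (x + 1) y) (hup : stepUp D (x + 1) (y + 1) < 0) :
    ∃ D', Flip D D' ∧ ∀ x' y' : ℕ, thurstonHeight D' x' y' =
      thurstonHeight D x' y' - if (x', y') = (x + 1, y + 1) then 4 else 0 := by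
  have hsquare : (vDomino (x + 1) (y + 1) ∈ D ∧ vDomino (x + 1 + 1) (y + 1) ∈ D) ∨
      (hDomino (x + 1) (y + 1) ∈ D ∧ hDomino (x + 1) (y + 1 + 1) ∈ D) := by
    unfold stepRight at hleft hright
    unfold stepUp at hdown hup
    rcases Int.emod_two_eq_zero_or_one ((x : ℤ) + y) with hpar | hpar
    · left
      constructor <;> by_contra h <;> simp only [h, if_false] at hleft hright <;>
        split_ifs at hleft hright <;> omega
    · right
      constructor <;> by_contra h <;> simp only [h, if_false] at hdown hup <;>
        split_ifs at hdown hup <;> omega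
  obtain ⟨D', hflip, hv₁, hv₂, hrest⟩ := hD.exists_flip_toggle hsquare
  refine ⟨D', hflip, thurstonHeight_eq_sub_four (fun t => ?_) ?_ ?_ fun s t h₁ h₂ => ?_⟩
  · exact stepUp_congr (hrest _ (vDomino_ne_hDomino _ _ _ _).symm
      (vDomino_ne_hDomino _ _ _ _).symm
      (by rw [Ne, hDomino_inj]; omega) (by rw [Ne, hDomino_inj]; omega))
  · exact_mod_cast stepRight_of_toggle_of_pos hv₁ hleft
  · exact_mod_cast stepRight_of_toggle_of_neg hv₂ hright
  · simp only [ne_eq, Prod.mk.injEq] at h₁ h₂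
    exact stepRight_congr (hrest _ (by rw [Ne, vDomino_inj]; omega)
      (by rw [Ne, vDomino_inj]; omega) (vDomino_ne_hDomino _ _ _ _) (vDomino_ne_hDomino _ _ _ _))

end Height

section Connectivity

variable {m n : ℕ} {D D' E : Finset (Finset (ℤ × ℤ))}

def heightDist (m n : ℕ) (D E : Finset (Finset (ℤ × ℤ))) : ℕ :=
  ∑ v ∈ range (m + 1) ×ˢ range (n + 1), (thurstonHeight D v.1 v.2 - thurstonHeight E v.1 v.2).natAbs

theorem heightDist_comm (m n : ℕ) (D E : Finset (Finset (ℤ × ℤ))) :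
    heightDist m n D E = heightDist m n E D :=
  sum_congr rfl fun _ _ => by rw [← Int.natAbs_neg, neg_sub]

theorem heightDist_lt_of_lowering {x y : ℕ} (hx : x ≤ m) (hy : y ≤ n)
    (hlower : ∀ x' y' : ℕ, thurstonHeight D' x' y' =
      thurstonHeight D x' y' - if (x', y') = (x, y) then 4 else 0)
    (hgap : thurstonHeight E x y + 4 ≤ thurstonHeight D x y) :
    heightDist m n D' E < heightDist m n D E := by
  refine sum_lt_sum (fun ⟨a, b⟩ _ => ?_) ⟨(x, y), by simp; omega, ?_⟩
  · rw [hlower]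
    split_ifs with h
    · obtain ⟨rfl, rfl⟩ := Prod.mk.inj h
      omega
    · simp
  · dsimp only
    rw [hlower, if_pos rfl]
    omega

theorem IsTiling.exists_flip_lowering_of_local_max (hD : IsTiling (rect m n) D)
    (hE : IsTiling (rect m n) E) {x y : ℕ} (hx : x + 2 ≤ m) (hy : y + 2 ≤ n)
    (hnbr : ∀ x' ≤ m, ∀ y' ≤ n, thurstonHeight E x' y' ≤ thurstonHeight E (x + 1) (y + 1) + 3 →
      thurstonHeight D x' y' ≤ thurstonHeight D (x + 1) (y + 1)) :
    ∃ D', Flip D D' ∧ ∀ x' y' : ℕ, thurstonHeight D' x' y' =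
      thurstonHeight D x' y' - if (x', y') = (x + 1, y + 1) then 4 else 0 := by
  have hrow := fun F => thurstonHeight_succ_left F x (y + 1)
  have hrow' := fun F => thurstonHeight_succ_left F (x + 1) (y + 1)
  have hcol := hD.thurstonHeight_succ_up (x := x + 1) (y := y) (by omega) (by omega)
  have hcol' := hD.thurstonHeight_succ_up (x := x + 1) (y := y + 1) (by omega) (by omega)
  have hcolE := hE.thurstonHeight_succ_up (x := x + 1) (y := y) (by omega) (by omega)
  have hcolE' := hE.thurstonHeight_succ_up (x := x + 1) (y := y + 1) (by omega) (by omega)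
  push_cast at hrow hrow' hcol hcol' hcolE hcolE'
  -- Steps of `E` are at most 3 in size, so `hnbr` applies to the four neighbours; steps of `D` are
  -- nonzero, so the neighbours are strictly lower for `D`.
  refine hD.exists_flip_lowering ?_ ?_ ?_ ?_
  · have := hnbr x (by omega) (y + 1) (by omega)
    have := hrow D; have := hrow E
    have := stepRight_cases D x (y + 1); have := stepRight_cases E x (y + 1)
    omega
  · have := hnbr (x + 1 + 1) (by omega) (y + 1) (by omega)
    have := hrow' D; have := hrow' E
    have := stepRight_cases D (x + 1) (y + 1); have := stepRight_cases E (x + 1) (y + 1)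
    omega
  · have := hnbr (x + 1) (by omega) y (by omega)
    have := stepUp_cases D (x + 1) y; have := stepUp_cases E (x + 1) y
    omega
  · have := hnbr (x + 1) (by omega) (y + 1 + 1) (by omega)
    have := stepUp_cases D (x + 1) (y + 1); have := stepUp_cases E (x + 1) (y + 1)
    omega

theorem IsTiling.exists_flip_heightDist_lt (hD : IsTiling (rect m n) D)
    (hE : IsTiling (rect m n) E)
    (h : ∃ x ≤ m, ∃ y ≤ n, thurstonHeight E x y < thurstonHeight D x y) :
    ∃ D', Flip D D' ∧ heightDist m n D' E < heightDist m n D E := by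
  obtain ⟨x₀, hx₀, y₀, hy₀, hlt₀⟩ := h
  obtain ⟨⟨x, y⟩, hS, hmax⟩ := ((range (m + 1) ×ˢ range (n + 1)).filter fun v =>
      thurstonHeight E v.1 v.2 < thurstonHeight D v.1 v.2).exists_max_image
    (fun v => thurstonHeight D v.1 v.2) ⟨(x₀, y₀), by simp; omega⟩
  simp only [mem_filter, mem_product, mem_range, and_imp, Prod.forall] at hS hmax
  obtain ⟨⟨hx, hy⟩, hlt⟩ := hS
  have hgap : thurstonHeight E x y + 4 ≤ thurstonHeight D x y := by
    have := four_dvd_thurstonHeight_sub D E x y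
    omega
  have hinterior : 0 < x ∧ x < m ∧ 0 < y ∧ y < n := by
    by_contra hb
    exact hlt.ne (hD.thurstonHeight_eq_of_boundary hE (by omega) (by omega) (by omega)).symm
  obtain ⟨x, rfl⟩ : ∃ x', x = x' + 1 := Nat.exists_eq_add_one.2 hinterior.1
  obtain ⟨y, rfl⟩ : ∃ y', y = y' + 1 := Nat.exists_eq_add_one.2 hinterior.2.2.1
  obtain ⟨D', hflip, hlower⟩ := hD.exists_flip_lowering_of_local_max hE (x := x) (y := y)
    (by omega) (by omega)
    fun x' hx' y' hy' hE' => by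
      by_cases h : thurstonHeight E x' y' < thurstonHeight D x' y'
      · exact hmax x' y' (by omega) (by omega) h
      · omega
  exact ⟨D', hflip, heightDist_lt_of_lowering (by omega) (by omega) hlower hgap⟩

theorem IsTiling.reflTransGen_flip (hD : IsTiling (rect m n) D) (hE : IsTiling (rect m n) E) :
    Relation.ReflTransGen Flip D E := by
  induction hk : heightDist m n D E using Nat.strong_induction_on generalizing D E with
  | _ k ih =>
  by_cases hDE : D = E
  · exact hDE ▸ .refl
  obtain ⟨x, hx, y, hy, hne⟩ :
      ∃ x ≤ m, ∃ y ≤ n, thurstonHeight D x y ≠ thurstonHeight E x y := by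
    by_contra! h
    exact hDE ((hD.subset_of_thurstonHeight_eq hE h).antisymm
      (hE.subset_of_thurstonHeight_eq hD fun x hx y hy => (h x hx y hy).symm))
  rcases hne.lt_or_gt with hlt | hgt
  · obtain ⟨E', hflip, hdist⟩ := hE.exists_flip_heightDist_lt hD ⟨x, hx, y, hy, hlt⟩
    rw [heightDist_comm, heightDist_comm m n E] at hdist
    exact (ih _ (hk ▸ hdist) hD (hflip.isTiling hE) rfl).tail (hflip.symm hE)
  · obtain ⟨D', hflip, hdist⟩ := hD.exists_flip_heightDist_lt hE ⟨x, hx, y, hy, hgt⟩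
    exact .head hflip (ih _ (hk ▸ hdist) (hflip.isTiling hD) hE rfl)

end Connectivity

noncomputable def verticalTiling (m c : ℕ) : Finset (Finset (ℤ × ℤ)) :=
  (Icc (1 : ℤ) m ×ˢ Icc (1 : ℤ) c).image fun q => vDomino q.1 (2 * q.2 - 1)

theorem vert_of_mem_verticalTiling {m c : ℕ} {d : Finset (ℤ × ℤ)} (hd : d ∈ verticalTiling m c) :
    Vert d := by
  obtain ⟨q, -, rfl⟩ := mem_image.1 hd
  exact ⟨q.1, 2 * q.2 - 1, rfl⟩

theorem isTiling_verticalTiling (m c : ℕ) :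
    IsTiling (rect m ((c + c : ℕ) : ℤ)) (verticalTiling m c) := by
  refine ⟨fun d hd => Or.inr (vert_of_mem_verticalTiling hd), fun d hd p hp => ?_, ?_⟩
  · obtain ⟨q, hq, rfl⟩ := mem_image.1 hd
    simp only [mem_product, mem_Icc] at hq
    simp only [mem_insert, mem_singleton] at hp
    rw [mem_rect]
    rcases hp with rfl | rfl <;> push_cast <;> omega
  · rintro ⟨i, j⟩ hp
    rw [mem_rect] at hp
    push_cast at hp
    obtain ⟨k, hk, hjk⟩ : ∃ k : ℤ, (1 ≤ k ∧ k ≤ c) ∧ (j = 2 * k - 1 ∨ j = 2 * k) :=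
      ⟨(j + 1) / 2, by omega⟩
    refine ⟨vDomino i (2 * k - 1), ⟨mem_image.2 ⟨(i, k), ?_, rfl⟩, ?_⟩, ?_⟩
    · simp only [mem_product, mem_Icc]
      omega
    · simp only [mem_insert, mem_singleton, Prod.mk.injEq, true_and]
      omega
    · rintro d ⟨hd, hpd⟩
      obtain ⟨⟨i', k⟩, hq, rfl⟩ := mem_image.1 hd
      simp only [mem_insert, mem_singleton, Prod.mk.injEq] at hpd
      rw [vDomino_inj]
      omega

theorem stmt2_general (m n : ℕ) (hne : Even n)
    (D : Finset (Finset (ℤ × ℤ))) (hD : IsTiling (rect (m : ℤ) (n : ℤ)) D) :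
    ∃ D₀ : Finset (Finset (ℤ × ℤ)), IsTiling (rect (m : ℤ) (n : ℤ)) D₀ ∧
      (∀ d ∈ D₀, Vert d) ∧ Relation.ReflTransGen Flip D₀ D := by
  obtain ⟨c, rfl⟩ := hne
  exact ⟨verticalTiling m c, isTiling_verticalTiling m c, fun _ => vert_of_mem_verticalTiling,
    (isTiling_verticalTiling m c).reflTransGen_flip hD⟩

theorem stmt2 (m n : ℕ) (hm : 0 < m) (hn : 0 < n) (hne : Even n)
    (D : Finset (Finset (ℤ × ℤ))) (hD : IsTiling (rect (m : ℤ) (n : ℤ)) D) :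
    ∃ D₀ : Finset (Finset (ℤ × ℤ)), IsTiling (rect (m : ℤ) (n : ℤ)) D₀ ∧
      (∀ d ∈ D₀, Vert d) ∧ Relation.ReflTransGen Flip D₀ D :=
  stmt2_general m n hne D hD
end

section
/- Let m,n be coprime positive integers with n odd, ξ = e^{4πi/n} a primitive n-th root of unity (n odd), H_n = {1,…,(n-1)/2} ⊂ ℤ/nℤ, and G_n the set of j ∈ H_n with mj mod n not in H_n. Then ∏_{j=1}^{(n-1)/2} (ξ^{mj} - 1)/(ξ^j - 1) = ξ^{N'} · (-1)^{#G_n} for some integer N'. -/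
open Finset

theorem stmt6 (m n : ℕ) (hm : 0 < m) (hn : Odd n) (hco : Nat.Coprime m n) :
    ∃ N' : ℤ,
      ∏ j ∈ Finset.Icc 1 ((n - 1) / 2),
          ((Complex.exp (4 * Real.pi * Complex.I / n)) ^ (m * j) - 1) /
            ((Complex.exp (4 * Real.pi * Complex.I / n)) ^ j - 1) =
        (Complex.exp (4 * Real.pi * Complex.I / n)) ^ N' *
          (-1) ^ ((Finset.Icc 1 ((n - 1) / 2)).filter
            (fun j => ¬ (m * j) % n ∈ Finset.Icc 1 ((n - 1) / 2))).card := by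
  obtain ⟨k, hk⟩ := hn
  have hn0 : n ≠ 0 := by omega
  haveI : NeZero n := ⟨hn0⟩
  have hk2 : (n - 1) / 2 = k := by omega
  rw [hk2]
  set ξ : ℂ := Complex.exp (4 * Real.pi * Complex.I / n) with hξdef
  have hprim : IsPrimitiveRoot ξ n := by
    have h1 := Complex.isPrimitiveRoot_exp n hn0
    have hc2 : Nat.Coprime 2 n := (Nat.Prime.coprime_iff_not_dvd Nat.prime_two).mpr
      (by omega)
    have h2 := h1.pow_of_coprime 2 hc2
    have : Complex.exp (2 * Real.pi * Complex.I / n) ^ 2 = ξ := by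
      rw [← Complex.exp_nat_mul]
      congr 1
      push_cast
      ring
    rwa [this] at h2
  have hpow_mod : ∀ a : ℕ, ξ ^ a = ξ ^ (a % n) := by
    intro a
    conv_lhs => rw [← Nat.mod_add_div a n]
    rw [pow_add, pow_mul, hprim.pow_eq_one, one_pow, mul_one]
  have hne : ∀ j ∈ Icc 1 k, ξ ^ j - 1 ≠ 0 := by
    intro j hj
    simp only [mem_Icc] at hj
    exact sub_ne_zero.mpr
      (hprim.pow_ne_one_of_pos_of_lt (by omega) (by omega))
  have hr_lt : ∀ j : ℕ, m * j % n < n := fun j => Nat.mod_lt _ (by omega)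
  have hr_pos : ∀ j ∈ Icc 1 k, 0 < m * j % n := by
    intro j hj
    simp only [mem_Icc] at hj
    rcases Nat.eq_zero_or_pos (m * j % n) with h0 | h
    · exfalso
      have hd : n ∣ m * j := Nat.dvd_of_mod_eq_zero h0
      have hd2 : n ∣ j := hco.symm.dvd_of_dvd_mul_left hd
      have := Nat.le_of_dvd (by omega) hd2
      omega
    · exact h
  have hu : IsUnit ((m : ZMod n)) := (ZMod.isUnit_iff_coprime m n).mpr hco
  have key : ∀ j1 ∈ Icc 1 k, ∀ j2 ∈ Icc 1 k,
      m * j1 % n = m * j2 % n → j1 = j2 := by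
    intro j1 hj1 j2 hj2 h
    simp only [mem_Icc] at hj1 hj2
    have hz : ((m * j1 % n : ℕ) : ZMod n) = ((m * j2 % n : ℕ) : ZMod n) := by rw [h]
    rw [ZMod.natCast_mod, ZMod.natCast_mod] at hz
    push_cast at hz
    have hj : (j1 : ZMod n) = (j2 : ZMod n) := hu.mul_left_cancel hz
    have := congrArg ZMod.val hj
    rwa [ZMod.val_cast_of_lt (by omega), ZMod.val_cast_of_lt (by omega)] at this
  have key2 : ∀ j1 ∈ Icc 1 k, ∀ j2 ∈ Icc 1 k,
      m * j1 % n + m * j2 % n = n → False := by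
    intro j1 hj1 j2 hj2 h
    simp only [mem_Icc] at hj1 hj2
    have hz : ((m * j1 % n + m * j2 % n : ℕ) : ZMod n) = ((n : ℕ) : ZMod n) := by rw [h]
    rw [ZMod.natCast_self] at hz
    push_cast [ZMod.natCast_mod] at hz
    have hz2 : (m : ZMod n) * (j1 + j2) = (m : ZMod n) * 0 := by ring_nf; rw [mul_comm]; ring_nf; linear_combination hz
    have hj : ((j1 + j2 : ℕ) : ZMod n) = 0 := by push_cast; simpa using hu.mul_left_cancel hz2
    have hd : n ∣ j1 + j2 := (ZMod.natCast_eq_zero_iff _ _).mp hj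
    have := Nat.le_of_dvd (by omega) hd
    omega
  set f : ℕ → ℕ := fun j => if (m * j) % n ∈ Icc 1 k then m * j % n else n - m * j % n
    with hf
  have hf_mem : ∀ j ∈ Icc 1 k, f j ∈ Icc 1 k := by
    intro j hj
    have h1 := hr_pos j hj
    have h2 := hr_lt j
    by_cases hc : (m * j) % n ∈ Icc 1 k
    · have hfj : f j = m * j % n := by
        show (if (m * j) % n ∈ Icc 1 k then m * j % n else n - m * j % n) = _
        rw [if_pos hc]
      rw [hfj]; exact hc
    · have hfj : f j = n - m * j % n := by
        show (if (m * j) % n ∈ Icc 1 k then m * j % n else n - m * j % n) = _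
        rw [if_neg hc]
      rw [hfj]
      simp only [mem_Icc] at hc ⊢
      omega
  have hf_inj : Set.InjOn f (Icc 1 k) := by
    intro j1 hj1 j2 hj2 h
    simp only [coe_Icc, Set.mem_Icc] at hj1 hj2
    have hj1' : j1 ∈ Icc 1 k := by simp [mem_Icc]; omega
    have hj2' : j2 ∈ Icc 1 k := by simp [mem_Icc]; omega
    have p1 := hr_pos j1 hj1'
    have p2 := hr_pos j2 hj2'
    have l1 := hr_lt j1
    have l2 := hr_lt j2
    simp only [hf, mem_Icc] at h
    by_cases c1 : 1 ≤ m * j1 % n ∧ m * j1 % n ≤ k <;>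
      by_cases c2 : 1 ≤ m * j2 % n ∧ m * j2 % n ≤ k
    · rw [if_pos c1, if_pos c2] at h
      exact key j1 hj1' j2 hj2' h
    · rw [if_pos c1, if_neg c2] at h
      exact absurd (key2 j1 hj1' j2 hj2' (by omega)) (by simp)
    · rw [if_neg c1, if_pos c2] at h
      exact absurd (key2 j1 hj1' j2 hj2' (by omega)) (by simp)
    · rw [if_neg c1, if_neg c2] at h
      exact key j1 hj1' j2 hj2' (by omega)
  have himg : (Icc 1 k).image f = Icc 1 k := by
    apply eq_of_subset_of_card_le
    · intro x hx
      obtain ⟨j, hj, rfl⟩ := mem_image.mp hx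
      exact hf_mem j hj
    · rw [card_image_of_injOn hf_inj]
  have hprod_f : ∏ j ∈ Icc 1 k, (ξ ^ (f j) - 1) = ∏ j ∈ Icc 1 k, (ξ ^ j - 1) := by
    conv_rhs => rw [← himg]
    rw [prod_image (fun x hx y hy h => hf_inj hx hy h)]
  have hfac : ∀ j ∈ Icc 1 k, ξ ^ (m * j) - 1 =
      (if (m * j) % n ∈ Icc 1 k then (1 : ℂ) else -ξ ^ (m * j % n)) * (ξ ^ (f j) - 1) := by
    intro j hj
    rw [hpow_mod (m * j)]
    by_cases hc : (m * j) % n ∈ Icc 1 k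
    · have hfj : f j = m * j % n := by
        show (if (m * j) % n ∈ Icc 1 k then m * j % n else n - m * j % n) = _
        rw [if_pos hc]
      rw [hfj, if_pos hc, one_mul]
    · have hfj : f j = n - m * j % n := by
        show (if (m * j) % n ∈ Icc 1 k then m * j % n else n - m * j % n) = _
        rw [if_neg hc]
      rw [hfj, if_neg hc]
      have h1 : m * j % n ≤ n := le_of_lt (hr_lt j)
      have hone : ξ ^ (m * j % n) * ξ ^ (n - m * j % n) = 1 := by
        rw [← pow_add, Nat.add_sub_cancel' h1, hprim.pow_eq_one]
      linear_combination hone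
  refine ⟨(∑ j ∈ (Icc 1 k).filter (fun j => ¬ (m * j) % n ∈ Icc 1 k), (m * j % n) : ℕ), ?_⟩
  calc ∏ j ∈ Icc 1 k, (ξ ^ (m * j) - 1) / (ξ ^ j - 1)
      = ∏ j ∈ Icc 1 k, ((if (m * j) % n ∈ Icc 1 k then (1 : ℂ) else -ξ ^ (m * j % n)) *
          ((ξ ^ (f j) - 1) / (ξ ^ j - 1))) := by
        refine prod_congr rfl fun j hj => ?_
        rw [hfac j hj]; ring
    _ = (∏ j ∈ Icc 1 k, (if (m * j) % n ∈ Icc 1 k then (1 : ℂ) else -ξ ^ (m * j % n))) *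
          ((∏ j ∈ Icc 1 k, (ξ ^ (f j) - 1)) / (∏ j ∈ Icc 1 k, (ξ ^ j - 1))) := by
        rw [prod_mul_distrib, prod_div_distrib]
    _ = ∏ j ∈ Icc 1 k, (if (m * j) % n ∈ Icc 1 k then (1 : ℂ) else -ξ ^ (m * j % n)) := by
        rw [hprod_f, div_self (prod_ne_zero_iff.mpr hne), mul_one]
    _ = ∏ j ∈ (Icc 1 k).filter (fun j => ¬ (m * j) % n ∈ Icc 1 k), (-ξ ^ (m * j % n)) := by
        rw [prod_ite, prod_const_one, one_mul]
    _ = ξ ^ ((∑ j ∈ (Icc 1 k).filter (fun j => ¬ (m * j) % n ∈ Icc 1 k), (m * j % n) : ℕ) : ℤ) *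
          (-1) ^ ((Icc 1 k).filter (fun j => ¬ (m * j) % n ∈ Icc 1 k)).card := by
        rw [zpow_natCast, ← prod_pow_eq_pow_sum, ← prod_const]
        rw [← prod_mul_distrib]
        refine prod_congr rfl fun j hj => ?_
        ring
end

section
/- Let m,n be positive integers with n odd, and let ζ_{2m} = e^{2πi/(2m)}, ζ_n = e^{2πi/n}. Then ∏_{i=1}^{m-1} ∏_{j=1}^{(n-1)/2} (ζ_{2m}^i + ζ_{2m}^{-i} + ζ_n^j + ζ_n^{-j}) = ζ_n^N · ∏_{j=1}^{(n-1)/2} (ξ^{mj}-1)/(ξ^j-1) for some integer N, where ξ = ζ_n². In particular, if gcd(m,n) > 1 this product is 0. -/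
/-- `ζ_N = e^{2πi/N}`. -/
noncomputable def zeta (N : ℕ) : ℂ := Complex.exp (2 * Real.pi * Complex.I / N)

/-! For a primitive `2m`-th root of unity `ζ`, the roots of `X ^ (2m) - 1` are `±1` together with
the pairs `ζ ^ i`, `ζ ^ (-i)` for `0 < i < m`, so
`(w ^ 2 - 1) * ∏_{0 < i < m} (w + ζ ^ i) (w + ζ ^ (-i)) = w ^ (2m) - 1`.
As `(ζ ^ i + ζ ^ (-i) + w + w⁻¹) * w = (w + ζ ^ i) (w + ζ ^ (-i))`, taking `w = ζ_n ^ j` turns the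
product over `i` into `ζ_n ^ (-j (m - 1)) * (ξ ^ (m j) - 1) / (ξ ^ j - 1)`.
If `d = gcd m n > 1`, then `j = n / d ≤ (n - 1) / 2` and `n ∣ m j`, so `ξ ^ (m j) - 1 = 0`. -/

open Finset

theorem IsPrimitiveRoot.prod_range_add_pow {R : Type*} [CommRing R] [IsDomain R] {ζ : R} {N : ℕ}
    (hζ : IsPrimitiveRoot ζ N) (hN : Even N) (hN0 : 0 < N) (w : R) :
    ∏ i ∈ range N, (w + ζ ^ i) = w ^ N - 1 := by
  have h := congrArg (Polynomial.eval w) (X_pow_sub_C_eq_prod hζ hN0 hN.neg_one_pow)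
  simpa [Polynomial.eval_prod, sub_eq_add_neg] using h.symm

theorem IsPrimitiveRoot.pow_half_eq_neg_one {R : Type*} [CommRing R] [IsDomain R] {ζ : R} {m : ℕ}
    (hζ : IsPrimitiveRoot ζ (2 * m)) (hm : 0 < m) : ζ ^ m = -1 := by
  have := hζ.pow_of_dvd hm.ne' (dvd_mul_left m 2)
  rw [Nat.mul_div_cancel _ hm] at this
  exact this.eq_neg_one_of_two_right

theorem IsPrimitiveRoot.sub_one_mul_prod_Ico_add_pow_mul_add_inv_pow {K : Type*} [Field K]
    {ζ : K} {m : ℕ} (hζ : IsPrimitiveRoot ζ (2 * m)) (hm : 0 < m) (w : K) :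
    (w ^ 2 - 1) * ∏ i ∈ Ico 1 m, ((w + ζ ^ i) * (w + ζ⁻¹ ^ i)) = w ^ (2 * m) - 1 := by
  have hreflect : ∏ i ∈ Ico 1 m, (w + ζ⁻¹ ^ i) = ∏ i ∈ Ico (m + 1) (2 * m), (w + ζ ^ i) := by
    have h := prod_Ico_reflect (fun i => w + ζ ^ i) 1 (by omega : m ≤ 2 * m + 1)
    rw [show 2 * m + 1 - m = m + 1 by omega, show 2 * m + 1 - 1 = 2 * m by omega] at h
    rw [← h]
    refine prod_congr rfl fun i hi => ?_
    rw [pow_sub₀ _ (hζ.ne_zero (by omega)) (by simp only [mem_Ico] at hi; omega), hζ.pow_eq_one, one_mul, inv_pow]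
  rw [← hζ.prod_range_add_pow (even_two_mul m) (by omega), range_eq_Ico,
    ← prod_Ico_consecutive _ (by omega : 0 ≤ m + 1) (by omega : m + 1 ≤ 2 * m),
    prod_Ico_succ_top (by omega), prod_eq_prod_Ico_succ_bot hm, prod_mul_distrib, hreflect,
    hζ.pow_half_eq_neg_one hm]
  ring

theorem IsPrimitiveRoot.prod_Icc_zpow_add_zpow_neg_add_add_inv_mul_pow {K : Type*} [Field K]
    {ζ : K} {m : ℕ} (hζ : IsPrimitiveRoot ζ (2 * m)) (hm : 0 < m) {w : K} (hw : w ≠ 0)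
    (hw2 : w ^ 2 ≠ 1) :
    (∏ i ∈ Icc 1 (m - 1), (ζ ^ (i : ℤ) + ζ ^ (-(i : ℤ)) + w + w⁻¹)) * w ^ (m - 1) =
      (w ^ (2 * m) - 1) / (w ^ 2 - 1) := by
  have hpair : ∀ i : ℕ, (ζ ^ (i : ℤ) + ζ ^ (-(i : ℤ)) + w + w⁻¹) * w =
      (w + ζ ^ i) * (w + ζ⁻¹ ^ i) := fun i => by
    have hζi : ζ ^ i ≠ 0 := pow_ne_zero _ (hζ.ne_zero (by omega))
    rw [zpow_neg, zpow_natCast, inv_pow]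
    field_simp
    ring
  have hIcc : Icc 1 (m - 1) = Ico 1 m := by ext; simp only [mem_Icc, mem_Ico]; omega
  rw [eq_div_iff (sub_ne_zero.mpr hw2), ← hζ.sub_one_mul_prod_Ico_add_pow_mul_add_inv_pow hm,
    ← hIcc, ← prod_congr rfl fun i _ => hpair i, ← prod_mul_pow_card,
    Nat.card_Icc, Nat.add_sub_cancel]
  ring

theorem Nat.exists_mem_Icc_half_dvd_mul_of_one_lt_gcd {m n : ℕ} (hn : Odd n)
    (hgcd : 1 < Nat.gcd m n) : ∃ j ∈ Icc 1 ((n - 1) / 2), n ∣ m * j := by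
  obtain ⟨k, hk⟩ := Nat.gcd_dvd_left m n
  obtain ⟨j, hj⟩ := Nat.gcd_dvd_right m n
  generalize Nat.gcd m n = d at hgcd hk hj
  subst hk hj
  refine ⟨j, ?_, k, by ring⟩
  have hd : Odd d := (Nat.odd_mul.mp hn).1
  have hj0 : 0 < j := Nat.pos_of_ne_zero (by rintro rfl; simp at hn)
  obtain ⟨r, rfl⟩ := hd
  have : 2 * j + 1 ≤ (2 * r + 1) * j := by nlinarith [Nat.mul_le_mul_right j (by omega : 1 ≤ r)]
  simp only [mem_Icc, Nat.le_div_iff_mul_le two_pos]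
  omega

theorem IsPrimitiveRoot.prod_Icc_prod_Icc_add_zpow_mul_pow {K : Type*} [Field K] {ζ ξ : K}
    {m n : ℕ} (hζ : IsPrimitiveRoot ζ (2 * m)) (hm : 0 < m) (hξ : IsPrimitiveRoot ξ n)
    (hn : Odd n) :
    (∏ i ∈ Icc 1 (m - 1), ∏ j ∈ Icc 1 ((n - 1) / 2),
        (ζ ^ (i : ℤ) + ζ ^ (-(i : ℤ)) + ξ ^ (j : ℤ) + ξ ^ (-(j : ℤ)))) *
        ξ ^ (∑ j ∈ Icc 1 ((n - 1) / 2), j * (m - 1)) =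
      ∏ j ∈ Icc 1 ((n - 1) / 2), ((ξ ^ 2) ^ (m * j) - 1) / ((ξ ^ 2) ^ j - 1) := by
  have hξ2 : IsPrimitiveRoot (ξ ^ 2) n := hξ.pow_of_coprime 2 (Nat.coprime_two_left.mpr hn)
  rw [prod_comm, ← prod_pow_eq_pow_sum, ← prod_mul_distrib]
  refine prod_congr rfl fun j hj => ?_
  simp only [mem_Icc] at hj
  have hξj : (ξ ^ j) ^ 2 ≠ 1 := by
    rw [← pow_mul, mul_comm, pow_mul]
    exact hξ2.pow_ne_one_of_pos_of_lt (by omega) (by omega)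
  rw [zpow_neg, zpow_natCast, pow_mul, hζ.prod_Icc_zpow_add_zpow_neg_add_add_inv_mul_pow hm
      (pow_ne_zero _ (hξ.ne_zero hn.pos.ne')) hξj]
  ring

theorem stmt7 (m n : ℕ) (hm : 0 < m) (hn : Odd n) :
    (∃ N : ℤ,
        ∏ i ∈ Finset.Icc 1 (m - 1), ∏ j ∈ Finset.Icc 1 ((n - 1) / 2),
            (zeta (2 * m) ^ (i : ℤ) + zeta (2 * m) ^ (-(i : ℤ)) +
              zeta n ^ (j : ℤ) + zeta n ^ (-(j : ℤ))) =
          zeta n ^ N *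
            ∏ j ∈ Finset.Icc 1 ((n - 1) / 2),
              ((zeta n ^ 2) ^ (m * j) - 1) / ((zeta n ^ 2) ^ j - 1)) ∧
      (1 < Nat.gcd m n →
        ∏ i ∈ Finset.Icc 1 (m - 1), ∏ j ∈ Finset.Icc 1 ((n - 1) / 2),
            (zeta (2 * m) ^ (i : ℤ) + zeta (2 * m) ^ (-(i : ℤ)) +
              zeta n ^ (j : ℤ) + zeta n ^ (-(j : ℤ))) = 0) := by
  have hζ : IsPrimitiveRoot (zeta (2 * m)) (2 * m) := Complex.isPrimitiveRoot_exp _ (by omega)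
  have hξ : IsPrimitiveRoot (zeta n) n := Complex.isPrimitiveRoot_exp n hn.pos.ne'
  have key := hζ.prod_Icc_prod_Icc_add_zpow_mul_pow hm hξ hn
  rw [← eq_div_iff (pow_ne_zero _ (hξ.ne_zero hn.pos.ne')), div_eq_inv_mul, ← zpow_natCast,
    ← zpow_neg] at key
  refine ⟨⟨_, key⟩, fun hgcd => ?_⟩
  obtain ⟨j, hj, hdvd⟩ := Nat.exists_mem_Icc_half_dvd_mul_of_one_lt_gcd hn hgcd
  have hξ2 := hξ.pow_of_coprime 2 (Nat.coprime_two_left.mpr hn)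
  rw [key]
  refine mul_eq_zero_of_right _ (prod_eq_zero hj ?_)
  rw [(hξ2.pow_eq_one_iff_dvd _).mpr hdvd, sub_self, zero_div]
end

section
/- For odd primes p and q (Eisenstein's formula): the Legendre symbol (q/p) equals 4^{((p-1)/2)((q-1)/2)} · ∏_{j=1}^{(p-1)/2} ∏_{k=1}^{(q-1)/2} (cos²(2πj/p) - cos²(2πk/q)). -/
/-!
Write `q = 2n + 1`. Pairing the factors `k` and `q - k` in the classical product
`(-4)^n ∏_{k < q} sin (x + 2πk/q) = sin (q x)` gives
`sin (q x) = 4^n sin x ∏_{k=1}^{n} (cos² x - cos² (2πk/q))`.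
On the other hand `x ↦ sin (2π x / p)` is an odd function on `ZMod p`, so Gauss's lemma turns
multiplication by `q` on `1, …, (p-1)/2` into the sign `(q/p)`:
`∏_{j=1}^{(p-1)/2} sin (2πqj/p) = (q/p) ∏_{j=1}^{(p-1)/2} sin (2πj/p)`.
Expanding the left side with the first identity at `x = 2πj/p` and cancelling the positive
product `∏ sin (2πj/p)` gives Eisenstein's formula.
-/

open Finset Real

open Polynomial in
theorem IsPrimitiveRoot.prod_one_sub_pow_mul {R : Type*} [CommRing R] [IsDomain R] {n : ℕ}
    {ζ : R} (hζ : IsPrimitiveRoot ζ n) (hn : 0 < n) (x : R) :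
    ∏ k ∈ range n, (1 - ζ ^ k * x) = 1 - x ^ n := by
  simpa [eval_prod] using congrArg (eval 1) (X_pow_sub_C_eq_prod hζ hn (rfl : x ^ n = x ^ n)).symm

theorem prod_range_pow_eq_one_of_odd {M : Type*} [CommMonoid M] {n : ℕ} (hn : Odd n) {ζ : M}
    (hζ : ζ ^ n = 1) : ∏ k ∈ range n, ζ ^ k = 1 := by
  obtain ⟨t, rfl⟩ := hn
  have hsum : ∑ k ∈ range (2 * t + 1), k = (2 * t + 1) * t := by
    have := sum_range_id_mul_two (2 * t + 1)
    simp only [Nat.add_sub_cancel] at this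
    linarith
  rw [prod_pow_eq_pow_sum, hsum, pow_mul, hζ, one_pow]

theorem prod_range_two_mul_add_one {M : Type*} [CommMonoid M] (f : ℕ → M) (n : ℕ) :
    ∏ k ∈ range (2 * n + 1), f k = f 0 * ∏ k ∈ Icc 1 n, f k * f (2 * n + 1 - k) := by
  have hreflect := prod_Ico_reflect f 1 (by omega : n + 1 ≤ 2 * n + 1 + 1)
  rw [show 2 * n + 1 + 1 - (n + 1) = n + 1 by omega, Nat.add_sub_cancel] at hreflect
  rw [prod_mul_distrib, ← Ico_add_one_right_eq_Icc, hreflect, prod_Ico_eq_prod_range,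
    ← prod_range_mul_prod_Ico f (by omega : n + 1 ≤ 2 * n + 1), prod_range_succ']
  simp only [add_comm 1]
  ac_rfl

namespace Complex

theorem two_mul_exp_mul_I_mul_sin (w : ℂ) :
    2 * exp (w * I) * sin w = I * (1 - exp (2 * w * I)) := by
  have h : exp (w * I) * exp (-w * I) = 1 := by rw [← exp_add]; simp
  rw [sin, show 2 * w * I = w * I + w * I by ring, exp_add]
  linear_combination I * h

theorem neg_four_pow_mul_prod_sin_add (n : ℕ) (z : ℂ) :
    (-4) ^ n * ∏ k ∈ range (2 * n + 1), sin (z + 2 * π * k / (2 * n + 1 : ℕ)) =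
      sin ((2 * n + 1 : ℕ) * z) := by
  set q := 2 * n + 1
  have hsin := two_mul_exp_mul_I_mul_sin (q * z)
  rw [show q * z * I = q * (z * I) by ring, exp_nat_mul,
    show 2 * (q * z) * I = ((2 * q : ℕ) : ℂ) * (z * I) by push_cast; ring, exp_nat_mul] at hsin
  set u := exp (z * I)
  set ζ := exp (2 * π * I / q)
  have hζ : IsPrimitiveRoot ζ q := isPrimitiveRoot_exp q (Nat.succ_ne_zero _)
  have hterm (k : ℕ) : 2 * (u * ζ ^ k) * sin (z + 2 * π * k / q) =
      I * (1 - (ζ ^ 2) ^ k * u ^ 2) := by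
    have h1 : exp ((z + 2 * π * k / q) * I) = u * ζ ^ k := by
      rw [← exp_nat_mul, ← exp_add]; congr 1; ring
    have h2 : exp (2 * (z + 2 * π * k / q) * I) = (ζ ^ 2) ^ k * u ^ 2 := by
      rw [← pow_mul, ← exp_nat_mul, ← exp_nat_mul, ← exp_add]; push_cast; congr 1; ring
    rw [← h1, ← h2, two_mul_exp_mul_I_mul_sin]
  have hprod := prod_congr rfl fun k (_ : k ∈ range q) => hterm k
  rw [prod_mul_distrib, prod_mul_distrib, prod_mul_distrib, prod_mul_distrib, prod_const,
    prod_const, prod_const, card_range,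
    prod_range_pow_eq_one_of_odd (odd_two_mul_add_one n) hζ.pow_eq_one,
    (hζ.pow_of_coprime 2 (Nat.coprime_two_left.2 (odd_two_mul_add_one n))).prod_one_sub_pow_mul
      (Nat.succ_pos _), ← pow_mul, pow_succ I, pow_mul I, I_sq, pow_succ (2 : ℂ),
    pow_mul] at hprod
  have hsq : ((-1 : ℂ) ^ n) ^ 2 = 1 := by rw [← pow_mul, mul_comm, pow_mul]; simp
  apply mul_left_cancel₀ (mul_ne_zero two_ne_zero (pow_ne_zero q (exp_ne_zero (z * I))))
  rw [neg_pow]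
  linear_combination (-1) ^ n * hprod - hsin + I * (1 - u ^ (2 * q)) * hsq

end Complex

namespace Real

theorem sin_add_mul_sin_sub (x y : ℝ) : sin (x + y) * sin (x - y) = cos y ^ 2 - cos x ^ 2 := by
  rw [sin_add, sin_sub]
  nlinarith [sin_sq_add_cos_sq x, sin_sq_add_cos_sq y]

theorem sin_two_mul_add_one_mul (n : ℕ) (x : ℝ) :
    sin ((2 * n + 1 : ℕ) * x) =
      4 ^ n * sin x *
        ∏ k ∈ Icc 1 n, (cos x ^ 2 - cos (2 * π * k / (2 * n + 1 : ℕ)) ^ 2) := by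
  have h : (-4) ^ n * ∏ k ∈ range (2 * n + 1), sin (x + 2 * π * k / (2 * n + 1 : ℕ)) =
      sin ((2 * n + 1 : ℕ) * x) := by
    exact_mod_cast Complex.neg_four_pow_mul_prod_sin_add n x
  have hpair : ∀ k ∈ Icc 1 n, sin (x + 2 * π * k / (2 * n + 1 : ℕ)) *
      sin (x + 2 * π * (2 * n + 1 - k : ℕ) / (2 * n + 1 : ℕ)) =
      -(cos x ^ 2 - cos (2 * π * k / (2 * n + 1 : ℕ)) ^ 2) := by
    intro k hk
    have hq : ((2 * n + 1 : ℕ) : ℝ) ≠ 0 := Nat.cast_ne_zero.2 (Nat.succ_ne_zero _)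
    rw [Nat.cast_sub (by simp at hk; omega), mul_sub, sub_div, mul_div_cancel_right₀ _ hq,
      add_sub_left_comm, add_comm (2 * π), sin_add_two_pi, sin_add_mul_sin_sub, neg_sub]
  rw [← h, prod_range_two_mul_add_one, prod_congr rfl hpair, prod_neg, Nat.card_Icc,
    Nat.add_sub_cancel]
  have hsign : (-4 : ℝ) ^ n * (-1) ^ n = 4 ^ n := by rw [← mul_pow]; norm_num
  rw [Nat.cast_zero, mul_zero, zero_div, add_zero, ← hsign]
  ring

theorem sin_two_pi_mul_mod_div (n p : ℕ) :
    sin (2 * π * (n % p : ℕ) / p) = sin (2 * π * n / p) := by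
  rcases Nat.eq_zero_or_pos p with rfl | hp
  · simp
  conv_rhs => rw [← Nat.mod_add_div n p]
  push_cast
  rw [show 2 * π * ((n % p : ℕ) + p * (n / p : ℕ)) / p =
      2 * π * (n % p : ℕ) / p + (n / p : ℕ) * (2 * π) by field_simp, sin_add_nat_mul_two_pi]

theorem odd_sin_two_pi_mul_val_div (p : ℕ) [NeZero p] :
    Function.Odd fun x : ZMod p => sin (2 * π * x.val / p) := by
  intro x
  have hp : (p : ℝ) ≠ 0 := Nat.cast_ne_zero.2 (NeZero.ne p)
  dsimp only
  rw [ZMod.neg_val', sin_two_pi_mul_mod_div, Nat.cast_sub x.val_le,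
    show 2 * π * ((p : ℝ) - x.val) / p = 2 * π - 2 * π * x.val / p by field_simp,
    sin_two_pi_sub]

theorem sin_two_pi_mul_div_pos {j p : ℕ} (hj : 0 < j) (hjp : 2 * j < p) :
    0 < sin (2 * π * j / p) := by
  have hp : (0 : ℝ) < p := by exact_mod_cast hj.trans_le (by omega)
  apply sin_pos_of_pos_of_lt_pi (by positivity)
  rw [div_lt_iff₀ hp]
  have : (2 * j : ℝ) < p := by exact_mod_cast hjp
  nlinarith [pi_pos]

end Real

theorem ZMod.prod_apply_mul_of_odd {R : Type*} [CommRing R] {p : ℕ} [Fact p.Prime]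
    (hp : p ≠ 2) {a : ℤ} (ha : (a : ZMod p) ≠ 0) {f : ZMod p → R} (hf : f.Odd) :
    ∏ x ∈ Icc 1 (p / 2), f (a * x) = legendreSym p a * ∏ x ∈ Icc 1 (p / 2), f x := by
  have hfold (y : ZMod p) :
      f y = (if p / 2 < y.val then -1 else 1) * f (y.valMinAbs.natAbs : ℕ) := by
    rw [natCast_natAbs_valMinAbs]
    split_ifs <;> first | omega | simp [hf y]
  have hperm : ∏ x ∈ Icc 1 (p / 2), f ((a * x : ZMod p).valMinAbs.natAbs : ℕ) =
      ∏ x ∈ Icc 1 (p / 2), f x := by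
    have := congrArg (fun s => (s.map (fun n : ℕ => f n)).prod)
      (Ico_map_valMinAbs_natAbs_eq_Ico_map_id p a ha)
    simpa only [Multiset.map_map, Function.comp_def, ← prod_eq_multiset_prod,
      Nat.succ_eq_add_one, Ico_add_one_right_eq_Icc] using this
  rw [prod_congr rfl fun x _ => hfold _, prod_mul_distrib, hperm, prod_ite, prod_const,
    prod_const, one_pow, mul_one, gauss_lemma hp ha, ← Ico_add_one_right_eq_Icc]
  norm_cast

theorem stmt9 (p q : ℕ) [Fact p.Prime] [Fact q.Prime] (hp : Odd p) (hq : Odd q)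
    (hpq : p ≠ q) :
    (legendreSym p q : ℝ) =
      4 ^ (((p - 1) / 2) * ((q - 1) / 2)) *
        ∏ j ∈ Finset.Icc 1 ((p - 1) / 2), ∏ k ∈ Finset.Icc 1 ((q - 1) / 2),
          (Real.cos (2 * Real.pi * j / p) ^ 2 - Real.cos (2 * Real.pi * k / q) ^ 2) := by
  have hp2 : p ≠ 2 := by rintro rfl; exact absurd hp (by decide)
  have hq0 : ((q : ℤ) : ZMod p) ≠ 0 := by exact_mod_cast ZMod.prime_ne_zero p q hpq
  obtain ⟨n, rfl⟩ := hq
  have hgauss := ZMod.prod_apply_mul_of_odd hp2 hq0 (odd_sin_two_pi_mul_val_div p)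
  have hval (y : ℕ) : sin (2 * π * (y : ZMod p).val / p) = sin (2 * π * y / p) := by
    rw [ZMod.val_natCast, sin_two_pi_mul_mod_div]
  have hexpand (j : ℕ) : sin (2 * π * ((2 * n + 1) * j : ℕ) / p) =
      4 ^ n * sin (2 * π * j / p) * ∏ k ∈ Icc 1 n,
        (cos (2 * π * j / p) ^ 2 - cos (2 * π * k / (2 * n + 1 : ℕ)) ^ 2) := by
    rw [← sin_two_mul_add_one_mul]; push_cast; ring_nf
  simp only [Int.cast_natCast, ← Nat.cast_mul, hval, hexpand, prod_mul_distrib, prod_const,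
    Nat.card_Icc, Nat.add_sub_cancel] at hgauss
  obtain ⟨m, rfl⟩ := hp
  have hpos : 0 < ∏ j ∈ Icc 1 ((2 * m + 1) / 2), sin (2 * π * j / (2 * m + 1 : ℕ)) :=
    prod_pos fun j hj => sin_two_pi_mul_div_pos (mem_Icc.1 hj).1 (by grind)
  rw [show (2 * m + 1 - 1) / 2 = (2 * m + 1) / 2 by omega, show (2 * n + 1 - 1) / 2 = n by omega,
    pow_mul']
  apply mul_right_cancel₀ hpos.ne'
  linear_combination -hgauss
end

section
/- Let X be a board, T ⊂ X, and S(T;U) = Σ_{D ∈ D(U): Cl_D(T) = U} i^{h(D)}, where Cl_D(T) is the minimal closed-for-D subset containing T. Then S(X) = Σ_{U: T ⊆ U ⊆ Cl(T)} S(X\U) · S(T;U), where Cl(T) = ⋃_{D ∈ D(X)} Cl_D(T). -/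
open Finset

attribute [local instance] Classical.propDecidable

/-- `U` is closed for the tiling `D`: no domino of `D` meets both `U` and its complement. -/
def ClosedFor (D : Finset (Finset (ℤ × ℤ))) (U : Finset (ℤ × ℤ)) : Prop :=
  ∀ d ∈ D, (∃ p ∈ d, p ∈ U) → ∀ p ∈ d, p ∈ U

/-- `Cl_D(T)`: the minimal subset of `X` containing `T` that is closed for `D`. -/
noncomputable def ClD (X : Finset (ℤ × ℤ)) (D : Finset (Finset (ℤ × ℤ)))
    (T : Finset (ℤ × ℤ)) : Finset (ℤ × ℤ) :=
  X.filter (fun p => ∀ U : Finset (ℤ × ℤ), U ⊆ X → T ⊆ U → ClosedFor D U → p ∈ U)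

/-- `Cl(T)`: the union of `Cl_D(T)` over all tilings `D` of `X`. -/
noncomputable def Cl (X T : Finset (ℤ × ℤ)) : Finset (ℤ × ℤ) :=
  (tilings X).biUnion (fun D => ClD X D T)

/-- `S(T;U) = ∑_{D ∈ D(U), Cl_D(T) = U} i^{h(D)}`. -/
noncomputable def SclT (T U : Finset (ℤ × ℤ)) : ℂ :=
  ∑ D ∈ (tilings U).filter (fun D => ClD U D T = U), Complex.I ^ hcount D

/-!
Sort the tilings `D` of `X` by `U = Cl_D(T)`. Since `U` is closed for `D`, the dominoes of `D`
inside `U` tile `U`, those outside tile `X \ U`, and the closure of `T` computed in `U` alone is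
still `U`; conversely, gluing a tiling of `X \ U` to such a tiling of `U` gives back a tiling of `X`
with `Cl_D(T) = U`. The number of horizontal dominoes is additive, so each fibre contributes
`S(X \ U) · S(T; U)`.
-/

lemma mem_tilings {X : Finset (ℤ × ℤ)} {D : Finset (Finset (ℤ × ℤ))} :
    D ∈ tilings X ↔ IsTiling X D := by
  simp only [tilings, mem_filter, mem_powerset, and_iff_right_iff_imp]
  exact fun hD d hd => mem_powerset.2 (hD.2.1 d hd)

namespace IsTiling

variable {X U : Finset (ℤ × ℤ)} {D D₁ D₂ : Finset (Finset (ℤ × ℤ))}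

lemma nonempty_of_mem (hD : IsTiling X D) {d : Finset (ℤ × ℤ)} (hd : d ∈ D) : d.Nonempty := by
  rcases hD.1 d hd with ⟨i, j, rfl⟩ | ⟨i, j, rfl⟩ <;> exact insert_nonempty _ _

lemma disjoint_of_mem_sdiff (hD : IsTiling (X \ U) D) {d : Finset (ℤ × ℤ)} (hd : d ∈ D) :
    Disjoint d U :=
  disjoint_of_subset_left (hD.2.1 d hd) sdiff_disjoint

lemma not_subset_of_mem_sdiff (hD : IsTiling (X \ U) D) {d : Finset (ℤ × ℤ)} (hd : d ∈ D) :
    ¬ d ⊆ U := fun hdU => by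
  obtain ⟨p, hp⟩ := hD.nonempty_of_mem hd
  exact disjoint_left.1 (hD.disjoint_of_mem_sdiff hd) hp (hdU hp)

lemma filter_subset (hD : IsTiling X D) (hUX : U ⊆ X) (hU : ClosedFor D U) :
    IsTiling U (D.filter fun d => d ⊆ U) := by
  refine ⟨fun d hd => hD.1 d (mem_filter.1 hd).1, fun d hd => (mem_filter.1 hd).2, ?_⟩
  intro p hp
  obtain ⟨d, ⟨hd, hpd⟩, huniq⟩ := hD.2.2 p (hUX hp)
  refine ⟨d, ⟨mem_filter.2 ⟨hd, hU d hd ⟨p, hpd, hp⟩⟩, hpd⟩, ?_⟩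
  rintro d' ⟨hd', hpd'⟩
  exact huniq d' ⟨(mem_filter.1 hd').1, hpd'⟩

lemma filter_not_subset (hD : IsTiling X D) (hU : ClosedFor D U) :
    IsTiling (X \ U) (D.filter fun d => ¬ d ⊆ U) := by
  refine ⟨fun d hd => hD.1 d (mem_filter.1 hd).1, ?_, ?_⟩
  · intro d hd q hq
    obtain ⟨hd, hdU⟩ := mem_filter.1 hd
    exact mem_sdiff.2 ⟨hD.2.1 d hd hq, fun hqU => hdU (hU d hd ⟨q, hq, hqU⟩)⟩
  · intro p hp
    obtain ⟨hpX, hpU⟩ := mem_sdiff.1 hp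
    obtain ⟨d, ⟨hd, hpd⟩, huniq⟩ := hD.2.2 p hpX
    refine ⟨d, ⟨mem_filter.2 ⟨hd, fun h => hpU (h hpd)⟩, hpd⟩, ?_⟩
    rintro d' ⟨hd', hpd'⟩
    exact huniq d' ⟨(mem_filter.1 hd').1, hpd'⟩

lemma union (hUX : U ⊆ X) (h₁ : IsTiling (X \ U) D₁) (h₂ : IsTiling U D₂) :
    IsTiling X (D₁ ∪ D₂) := by
  refine ⟨fun d hd => ?_, fun d hd => ?_, fun p hp => ?_⟩
  · rcases mem_union.1 hd with h | h
    exacts [h₁.1 d h, h₂.1 d h]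
  · rcases mem_union.1 hd with h | h
    exacts [(h₁.2.1 d h).trans sdiff_subset, (h₂.2.1 d h).trans hUX]
  · by_cases hpU : p ∈ U
    · obtain ⟨d, ⟨hd, hpd⟩, huniq⟩ := h₂.2.2 p hpU
      refine ⟨d, ⟨mem_union_right _ hd, hpd⟩, ?_⟩
      rintro d' ⟨hd', hpd'⟩
      rcases mem_union.1 hd' with h | h
      · exact absurd hpU (mem_sdiff.1 (h₁.2.1 d' h hpd')).2
      · exact huniq d' ⟨h, hpd'⟩
    · obtain ⟨d, ⟨hd, hpd⟩, huniq⟩ := h₁.2.2 p (mem_sdiff.2 ⟨hp, hpU⟩)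
      refine ⟨d, ⟨mem_union_left _ hd, hpd⟩, ?_⟩
      rintro d' ⟨hd', hpd'⟩
      rcases mem_union.1 hd' with h | h
      · exact huniq d' ⟨h, hpd'⟩
      · exact absurd (h₂.2.1 d' h hpd') hpU

lemma filter_subset_union (h₁ : IsTiling (X \ U) D₁) (h₂ : ∀ d ∈ D₂, d ⊆ U) :
    (D₁ ∪ D₂).filter (fun d => d ⊆ U) = D₂ := by
  rw [filter_union, filter_false_of_mem fun d hd => h₁.not_subset_of_mem_sdiff hd,
    filter_true_of_mem h₂, empty_union]

lemma filter_not_subset_union (h₁ : IsTiling (X \ U) D₁) (h₂ : ∀ d ∈ D₂, d ⊆ U) :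
    (D₁ ∪ D₂).filter (fun d => ¬ d ⊆ U) = D₁ := by
  rw [filter_union, filter_true_of_mem fun d hd => h₁.not_subset_of_mem_sdiff hd,
    filter_false_of_mem fun d hd => not_not.2 (h₂ d hd), union_empty]

end IsTiling

lemma closedFor_union {U : Finset (ℤ × ℤ)} {D₁ D₂ : Finset (Finset (ℤ × ℤ))}
    (h₁ : ∀ d ∈ D₁, Disjoint d U) (h₂ : ∀ d ∈ D₂, d ⊆ U) : ClosedFor (D₁ ∪ D₂) U := by
  rintro d hd ⟨p, hpd, hp⟩ q hqd
  rcases mem_union.1 hd with h | h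
  · exact absurd hp (disjoint_left.1 (h₁ d h) hpd)
  · exact h₂ d h hqd

lemma ClosedFor.inter {D : Finset (Finset (ℤ × ℤ))} {U V : Finset (ℤ × ℤ)}
    (hU : ClosedFor D U) (hV : ClosedFor D V) : ClosedFor D (U ∩ V) := by
  rintro d hd ⟨p, hpd, hp⟩ q hqd
  obtain ⟨hpU, hpV⟩ := mem_inter.1 hp
  exact mem_inter.2 ⟨hU d hd ⟨p, hpd, hpU⟩ q hqd, hV d hd ⟨p, hpd, hpV⟩ q hqd⟩

section Closure

variable {X T U : Finset (ℤ × ℤ)} {D : Finset (Finset (ℤ × ℤ))}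

lemma subset_ClD (D : Finset (Finset (ℤ × ℤ))) (hT : T ⊆ X) : T ⊆ ClD X D T :=
  fun _ hp => mem_filter.2 ⟨hT hp, fun _ _ hTU _ => hTU hp⟩

lemma closedFor_ClD (hD : ∀ d ∈ D, d ⊆ X) : ClosedFor D (ClD X D T) := by
  rintro d hd ⟨p, hpd, hp⟩ q hqd
  refine mem_filter.2 ⟨hD d hd hqd, fun U hUX hTU hU => ?_⟩
  exact hU d hd ⟨p, hpd, (mem_filter.1 hp).2 U hUX hTU hU⟩ q hqd

lemma ClD_eq_ClD_filter (hUX : U ⊆ X) (hTU : T ⊆ U) (hU : ClosedFor D U) :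
    ClD X D T = ClD U (D.filter fun d => d ⊆ U) T := by
  ext p
  simp only [ClD, mem_filter]
  constructor
  · rintro ⟨-, hp⟩
    refine ⟨hp U hUX hTU hU, fun V hVU hTV hV => hp V (hVU.trans hUX) hTV ?_⟩
    rintro d hd ⟨q, hqd, hq⟩
    exact hV d (mem_filter.2 ⟨hd, hU d hd ⟨q, hqd, hVU hq⟩⟩) ⟨q, hqd, hq⟩
  · rintro ⟨hpU, hp⟩
    exact ⟨hUX hpU, fun V _ hTV hV => (mem_inter.1 (hp (V ∩ U) inter_subset_right
      (subset_inter hTV hTU) fun d hd => (hV.inter hU) d (mem_filter.1 hd).1)).1⟩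

lemma ClD_subset_Cl (hD : D ∈ tilings X) : ClD X D T ⊆ Cl X T :=
  fun _ hp => mem_biUnion.2 ⟨D, hD, hp⟩

lemma Cl_subset (X T : Finset (ℤ × ℤ)) : Cl X T ⊆ X :=
  biUnion_subset.2 fun _ _ => filter_subset _ _

end Closure

lemma hcount_filter_add_hcount_filter_not (D : Finset (Finset (ℤ × ℤ)))
    (p : Finset (ℤ × ℤ) → Prop) [DecidablePred p] :
    hcount (D.filter fun d => ¬ p d) + hcount (D.filter p) = hcount D := by
  simp only [hcount, filter_comm _ Horiz]
  rw [add_comm, card_filter_add_card_filter_not]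

lemma sum_tilings_ClD_eq {X T U : Finset (ℤ × ℤ)} (hUX : U ⊆ X) (hTU : T ⊆ U) :
    ∑ D ∈ (tilings X).filter (fun D => ClD X D T = U), Complex.I ^ hcount D =
      Scomp (X \ U) * SclT T U := by
  rw [Scomp, SclT, sum_mul_sum, ← sum_product']
  refine sum_nbij' (fun D => (D.filter fun d => ¬ d ⊆ U, D.filter fun d => d ⊆ U))
    (fun D => D.1 ∪ D.2) ?_ ?_ ?_ ?_ ?_
  · intro D hD
    obtain ⟨hD, hClD⟩ := mem_filter.1 hD
    have hD := mem_tilings.1 hD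
    have hU : ClosedFor D U := hClD ▸ closedFor_ClD hD.2.1
    refine mem_product.2 ⟨mem_tilings.2 (hD.filter_not_subset hU), mem_filter.2
      ⟨mem_tilings.2 (hD.filter_subset hUX hU), ?_⟩⟩
    rw [← ClD_eq_ClD_filter hUX hTU hU, hClD]
  · rintro ⟨D₁, D₂⟩ hD
    obtain ⟨h₁, h₂⟩ := mem_product.1 hD
    obtain ⟨h₂, hClD⟩ := mem_filter.1 h₂
    rw [mem_tilings] at h₁ h₂
    have hU := closedFor_union (fun _ hd => h₁.disjoint_of_mem_sdiff hd) h₂.2.1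
    refine mem_filter.2 ⟨mem_tilings.2 (h₁.union hUX h₂), ?_⟩
    rw [ClD_eq_ClD_filter hUX hTU hU, h₁.filter_subset_union h₂.2.1, hClD]
  · intro D _
    rw [union_comm, filter_union_filter_not_eq]
  · rintro ⟨D₁, D₂⟩ hD
    obtain ⟨h₁, h₂⟩ := mem_product.1 hD
    have h₂ := (mem_tilings.1 (mem_filter.1 h₂).1).2.1
    exact Prod.ext ((mem_tilings.1 h₁).filter_not_subset_union h₂)
      ((mem_tilings.1 h₁).filter_subset_union h₂)
  · intro D _
    rw [← pow_add, hcount_filter_add_hcount_filter_not]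

theorem stmt14 (X T : Finset (ℤ × ℤ)) (hT : T ⊆ X) :
    Scomp X =
      ∑ U ∈ (Cl X T).powerset.filter (fun U => T ⊆ U),
        Scomp (X \ U) * SclT T U := by
  have hClD : ∀ D ∈ tilings X, ClD X D T ∈ (Cl X T).powerset.filter (fun U => T ⊆ U) :=
    fun D hD => mem_filter.2 ⟨mem_powerset.2 (ClD_subset_Cl hD), subset_ClD D hT⟩
  rw [Scomp, ← sum_fiberwise_of_maps_to hClD]
  refine sum_congr rfl fun U hU => ?_
  obtain ⟨hUCl, hTU⟩ := mem_filter.1 hU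
  exact sum_tilings_ClD_eq ((mem_powerset.1 hUCl).trans (Cl_subset X T)) hTU
end

section
/- Let m > n be positive odd integers, Y = {(i,j) ∈ R_{m-1,n-1} : i + j < (m+n)/2}, and for A ⊆ [n-1] let Y_A = Y ∪ {((m+n)/2 - a, a) : a ∈ A}. Then S(R_{m-1,n-1}) = Σ_{A ⊆ [n-1]} S(Y_{n - A^c}) · S(Y_A), where A^c = [n-1]\A and n - B = {n - i : i ∈ B}. -/
open Finset

attribute [local instance] Classical.propDecidable

/-- The lower-left half `Y` of the rectangle `R_{m-1,n-1}`. -/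
noncomputable def Yb (m n : ℕ) : Finset (ℤ × ℤ) :=
  (rect ((m : ℤ) - 1) ((n : ℤ) - 1)).filter (fun p => p.1 + p.2 < ((m : ℤ) + n) / 2)

/-- `Y_A = Y ∪ {((m+n)/2 - a, a) : a ∈ A}`. -/
noncomputable def YA (m n : ℕ) (A : Finset ℕ) : Finset (ℤ × ℤ) :=
  Yb m n ∪ A.image (fun a => (((m : ℤ) + n) / 2 - a, (a : ℤ)))

/-!
A domino covers cells on two consecutive antidiagonals `p.1 + p.2 = s, s + 1`. Cut a tiling of
`R = R_{m-1,n-1}` along the antidiagonal `c = (m+n)/2`: the dominoes lying weakly below it tile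
`Y` together with the set `T` of diagonal cells they cover, and the others tile the rest of `R`.
Conversely such a pair of tilings glues to a tiling of `R`, and `h` is additive, so
`S(R) = ∑_T S(R \ Y_T) S(Y_T)`. As `m + n = 2c`, the half-turn `p ↦ (m, n) - p` preserves `R`,
the orientation of dominoes and the antidiagonal `c`, and maps `Y_{n - A^c}` onto `R \ Y_A`.
-/

lemma exists_eq_pair_of_horiz_or_vert {d : Finset (ℤ × ℤ)} (h : Horiz d ∨ Vert d) :
    ∃ p q : ℤ × ℤ, d = {p, q} ∧ q.1 + q.2 = p.1 + p.2 + 1 := by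
  rcases h with ⟨i, j, rfl⟩ | ⟨i, j, rfl⟩
  · exact ⟨(i, j), (i + 1, j), rfl, by ring⟩
  · exact ⟨(i, j), (i, j + 1), rfl, by ring⟩

lemma hcount_union {D₁ D₂ : Finset (Finset (ℤ × ℤ))} (h : Disjoint D₁ D₂) :
    hcount (D₁ ∪ D₂) = hcount D₁ + hcount D₂ := by
  rw [hcount, filter_union, card_union_of_disjoint (disjoint_filter_filter h), hcount, hcount]

namespace IsTiling

variable {X Y : Finset (ℤ × ℤ)} {D D' E : Finset (Finset (ℤ × ℤ))}

lemma biUnion_eq (h : IsTiling X D) : D.biUnion id = X := by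
  ext p
  simp only [mem_biUnion, id]
  constructor
  · rintro ⟨d, hd, hp⟩
    exact h.2.1 d hd hp
  · intro hp
    obtain ⟨d, ⟨hd, hpd⟩, -⟩ := h.2.2 p hp
    exact ⟨d, hd, hpd⟩

lemma eq_of_mem_s15 (h : IsTiling X D) {d e : Finset (ℤ × ℤ)} {p : ℤ × ℤ} (hd : d ∈ D) (he : e ∈ D)
    (hpd : p ∈ d) (hpe : p ∈ e) : d = e :=
  (h.2.2 p (h.2.1 d hd hpd)).unique ⟨hd, hpd⟩ ⟨he, hpe⟩

lemma of_subset (h : IsTiling X D) (hD : D' ⊆ D) : IsTiling (D'.biUnion id) D' := by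
  refine ⟨fun d hd => h.1 d (hD hd), fun d hd => subset_biUnion_of_mem id hd, fun p hp => ?_⟩
  obtain ⟨d, hd, hpd⟩ := mem_biUnion.1 hp
  exact ⟨d, ⟨hd, hpd⟩, fun e he => h.eq_of_mem_s15 (hD he.1) (hD hd) he.2 hpd⟩

lemma sdiff (h : IsTiling X D) (hD : D' ⊆ D) : IsTiling (X \ D'.biUnion id) (D \ D') := by
  convert h.of_subset (sdiff_subset (s := D) (t := D'))
  ext p
  simp only [mem_sdiff, mem_biUnion, id, not_exists, not_and]
  constructor
  · rintro ⟨hp, hpD'⟩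
    obtain ⟨d, ⟨hd, hpd⟩, -⟩ := h.2.2 p hp
    exact ⟨d, ⟨hd, fun hd' => hpD' d hd' hpd⟩, hpd⟩
  · rintro ⟨d, ⟨hd, hdD'⟩, hpd⟩
    exact ⟨h.2.1 d hd hpd, fun e he hpe => hdD' (h.eq_of_mem_s15 (hD he) hd hpe hpd ▸ he)⟩

lemma disjoint (h₁ : IsTiling X D) (h₂ : IsTiling Y E) (hXY : Disjoint X Y) : Disjoint D E := by
  refine disjoint_left.2 fun d hd hdE => ?_
  obtain ⟨p, q, rfl, -⟩ := exists_eq_pair_of_horiz_or_vert (h₁.1 _ hd)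
  exact disjoint_left.1 hXY (h₁.2.1 _ hd (mem_insert_self p {q}))
    (h₂.2.1 _ hdE (mem_insert_self p {q}))

lemma union_s15 (h₁ : IsTiling X D) (h₂ : IsTiling Y E) (hXY : Disjoint X Y) :
    IsTiling (X ∪ Y) (D ∪ E) := by
  refine ⟨fun d hd => (mem_union.1 hd).elim (h₁.1 d) (h₂.1 d), fun d hd => ?_, fun p hp => ?_⟩
  · rcases mem_union.1 hd with hd | hd
    · exact (h₁.2.1 d hd).trans subset_union_left
    · exact (h₂.2.1 d hd).trans subset_union_right
  · rcases mem_union.1 hp with hp | hp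
    · obtain ⟨d, ⟨hd, hpd⟩, hu⟩ := h₁.2.2 p hp
      refine ⟨d, ⟨mem_union_left _ hd, hpd⟩, fun e ⟨he, hpe⟩ => ?_⟩
      rcases mem_union.1 he with he | he
      · exact hu e ⟨he, hpe⟩
      · exact absurd (h₂.2.1 e he hpe) (disjoint_left.1 hXY hp)
    · obtain ⟨d, ⟨hd, hpd⟩, hu⟩ := h₂.2.2 p hp
      refine ⟨d, ⟨mem_union_right _ hd, hpd⟩, fun e ⟨he, hpe⟩ => ?_⟩
      rcases mem_union.1 he with he | he
      · exact absurd (h₁.2.1 e he hpe) (disjoint_right.1 hXY hp)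
      · exact hu e ⟨he, hpe⟩

end IsTiling

section DiagonalSplit

variable {X T : Finset (ℤ × ℤ)} {c : ℤ} {D D₁ D₂ : Finset (Finset (ℤ × ℤ))}

noncomputable def diagCells (X : Finset (ℤ × ℤ)) (c : ℤ) : Finset (ℤ × ℤ) :=
  X.filter (fun p => p.1 + p.2 = c)

/-- The paper's `Y_A`, with the set `T` of diagonal cells in place of their rows `A`. -/
noncomputable def lowerRegion (X T : Finset (ℤ × ℤ)) (c : ℤ) : Finset (ℤ × ℤ) :=
  X.filter (fun p => p.1 + p.2 < c) ∪ T

noncomputable def lowerDominoes (c : ℤ) (D : Finset (Finset (ℤ × ℤ))) :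
    Finset (Finset (ℤ × ℤ)) :=
  D.filter (fun d => ∀ p ∈ d, p.1 + p.2 ≤ c)

noncomputable def diagCut (c : ℤ) (D : Finset (Finset (ℤ × ℤ))) : Finset (ℤ × ℤ) :=
  diagCells ((lowerDominoes c D).biUnion id) c

lemma lowerDominoes_subset : lowerDominoes c D ⊆ D :=
  filter_subset _ _

lemma lowerRegion_subset (hT : T ⊆ diagCells X c) : lowerRegion X T c ⊆ X :=
  union_subset (filter_subset _ _) (hT.trans (filter_subset _ _))

lemma sum_le_of_mem_lowerRegion (hT : T ⊆ diagCells X c) {p : ℤ × ℤ}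
    (hp : p ∈ lowerRegion X T c) : p.1 + p.2 ≤ c := by
  rcases mem_union.1 hp with hp | hp
  · exact (mem_filter.1 hp).2.le
  · exact (mem_filter.1 (hT hp)).2.le

lemma le_sum_of_notMem_lowerRegion {p : ℤ × ℤ} (hpX : p ∈ X) (hp : p ∉ lowerRegion X T c) :
    c ≤ p.1 + p.2 :=
  not_lt.1 fun hlt => hp (mem_union_left _ (mem_filter.2 ⟨hpX, hlt⟩))

lemma diagCells_lowerRegion (hT : T ⊆ diagCells X c) : diagCells (lowerRegion X T c) c = T := by
  ext p
  simp only [diagCells, lowerRegion, mem_filter, mem_union]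
  constructor
  · rintro ⟨hp | hp, hpc⟩
    · exact absurd hpc hp.2.ne
    · exact hp
  · intro hp
    exact ⟨Or.inr hp, (mem_filter.1 (hT hp)).2⟩

lemma diagCut_subset (h : IsTiling X D) : diagCut c D ⊆ diagCells X c :=
  filter_subset_filter _ ((biUnion_subset_biUnion_of_subset_left _ lowerDominoes_subset).trans
    h.biUnion_eq.le)

/-- A domino meets at most two consecutive antidiagonals, so the dominoes of a tiling lying
weakly below the antidiagonal `c` cover everything strictly below it. -/
lemma biUnion_lowerDominoes (h : IsTiling X D) :
    (lowerDominoes c D).biUnion id = lowerRegion X (diagCut c D) c := by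
  ext p
  constructor
  · intro hp
    obtain ⟨d, hd, hpd⟩ := mem_biUnion.1 hp
    have hdD := mem_filter.1 hd
    rcases (hdD.2 p hpd).lt_or_eq with hlt | heq
    · exact mem_union_left _ (mem_filter.2 ⟨h.2.1 d hdD.1 hpd, hlt⟩)
    · exact mem_union_right _ (mem_filter.2 ⟨hp, heq⟩)
  · intro hp
    rcases mem_union.1 hp with hp | hp
    · obtain ⟨hpX, hlt⟩ := mem_filter.1 hp
      obtain ⟨d, ⟨hd, hpd⟩, -⟩ := h.2.2 p hpX
      refine mem_biUnion.2 ⟨d, mem_filter.2 ⟨hd, fun q hq => ?_⟩, hpd⟩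
      obtain ⟨x, y, rfl, hxy⟩ := exists_eq_pair_of_horiz_or_vert (h.1 d hd)
      simp only [mem_insert, mem_singleton] at hpd hq
      rcases hpd with rfl | rfl <;> rcases hq with rfl | rfl <;> omega
    · exact (mem_filter.1 hp).1

lemma lowerDominoes_union (hT : T ⊆ diagCells X c) (h₁ : IsTiling (lowerRegion X T c) D₁)
    (h₂ : IsTiling (X \ lowerRegion X T c) D₂) : lowerDominoes c (D₁ ∪ D₂) = D₁ := by
  ext d
  simp only [lowerDominoes, mem_filter, mem_union]
  constructor
  · rintro ⟨hd | hd, hle⟩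
    · exact hd
    · obtain ⟨p, q, rfl, hpq⟩ := exists_eq_pair_of_horiz_or_vert (h₂.1 _ hd)
      obtain ⟨hpX, hpL⟩ := mem_sdiff.1 (h₂.2.1 _ hd (mem_insert_self p {q}))
      have := le_sum_of_notMem_lowerRegion hpX hpL
      have := hle q (by simp)
      omega
  · exact fun hd => ⟨Or.inl hd, fun p hp => sum_le_of_mem_lowerRegion hT (h₁.2.1 d hd hp)⟩

lemma sum_tilings_filter_diagCut_eq (hT : T ⊆ diagCells X c) :
    ∑ D ∈ (tilings X).filter (fun D => diagCut c D = T), Complex.I ^ hcount D =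
      Scomp (X \ lowerRegion X T c) * Scomp (lowerRegion X T c) := by
  rw [Scomp, Scomp, sum_mul_sum, ← sum_product']
  refine sum_nbij' (fun D => (D \ lowerDominoes c D, lowerDominoes c D)) (fun E => E.2 ∪ E.1)
    ?_ ?_ ?_ ?_ ?_
  · intro D hD
    rw [mem_filter, mem_tilings] at hD
    obtain ⟨hD, rfl⟩ := hD
    have hlow := biUnion_lowerDominoes (c := c) hD
    rw [mem_product, mem_tilings, mem_tilings, ← hlow]
    exact ⟨hD.sdiff lowerDominoes_subset, hD.of_subset lowerDominoes_subset⟩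
  · rintro ⟨E₂, E₁⟩ hE
    obtain ⟨h₂, h₁⟩ := mem_product.1 hE
    have h₁ := mem_tilings.1 h₁
    have h₂ := mem_tilings.1 h₂
    have hX : lowerRegion X T c ∪ (X \ lowerRegion X T c) = X :=
      union_sdiff_of_subset (lowerRegion_subset hT)
    rw [mem_filter, mem_tilings, diagCut, lowerDominoes_union hT h₁ h₂, h₁.biUnion_eq,
      diagCells_lowerRegion hT, ← hX]
    exact ⟨h₁.union_s15 h₂ disjoint_sdiff, rfl⟩
  · intro D _
    exact union_sdiff_of_subset lowerDominoes_subset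
  · rintro ⟨E₂, E₁⟩ hE
    obtain ⟨h₂, h₁⟩ := mem_product.1 hE
    have h₁ := mem_tilings.1 h₁
    have h₂ := mem_tilings.1 h₂
    rw [lowerDominoes_union hT h₁ h₂,
      union_sdiff_cancel_left (h₁.disjoint h₂ disjoint_sdiff)]
  · intro D _
    rw [← pow_add, ← hcount_union sdiff_disjoint, sdiff_union_of_subset lowerDominoes_subset]

theorem Scomp_eq_sum_powerset_diagCells (X : Finset (ℤ × ℤ)) (c : ℤ) :
    Scomp X = ∑ T ∈ (diagCells X c).powerset,
      Scomp (X \ lowerRegion X T c) * Scomp (lowerRegion X T c) := by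
  rw [Scomp, ← sum_fiberwise_of_maps_to (g := diagCut c)
    (fun D hD => mem_powerset.2 (diagCut_subset (mem_tilings.1 hD)))]
  exact sum_congr rfl fun T hT => sum_tilings_filter_diagCut_eq (mem_powerset.1 hT)

end DiagonalSplit

lemma isTiling_finsetCongr_iff (e : ℤ × ℤ ≃ ℤ × ℤ) (hH : ∀ d, Horiz (e.finsetCongr d) ↔ Horiz d)
    (hV : ∀ d, Vert (e.finsetCongr d) ↔ Vert d) {X : Finset (ℤ × ℤ)}
    {D : Finset (Finset (ℤ × ℤ))} :
    IsTiling (e.finsetCongr X) (e.finsetCongr.finsetCongr D) ↔ IsTiling X D := by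
  simp only [IsTiling, Equiv.finsetCongr_apply e.finsetCongr, forall_mem_map,
    Equiv.coe_toEmbedding, hH, hV]
  refine and_congr Iff.rfl (and_congr (forall₂_congr fun d _ => ?_) ?_)
  · rw [Equiv.finsetCongr_apply, Equiv.finsetCongr_apply, map_subset_map]
  · rw [Equiv.finsetCongr_apply e X, forall_mem_map]
    refine forall₂_congr fun p _ => (e.finsetCongr.existsUnique_congr fun d => ?_).symm
    exact and_congr (mem_map' _).symm (mem_map' _).symm

lemma Scomp_finsetCongr (e : ℤ × ℤ ≃ ℤ × ℤ) (hH : ∀ d, Horiz (e.finsetCongr d) ↔ Horiz d)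
    (hV : ∀ d, Vert (e.finsetCongr d) ↔ Vert d) (X : Finset (ℤ × ℤ)) :
    Scomp (e.finsetCongr X) = Scomp X := by
  refine (sum_equiv e.finsetCongr.finsetCongr (fun D => ?_) (fun D _ => ?_)).symm
  · rw [mem_tilings, mem_tilings, isTiling_finsetCongr_iff e hH hV]
  · rw [hcount, hcount, Equiv.finsetCongr_apply, filter_map, card_map]
    congr 2
    exact filter_congr fun d _ => (hH d).symm

def halfTurn (a b : ℤ) : Equiv.Perm (ℤ × ℤ) :=
  Function.Involutive.toPerm (fun p => (a - p.1, b - p.2)) fun p => by simp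

section HalfTurn

variable {a b : ℤ} {d : Finset (ℤ × ℤ)}

lemma halfTurn_apply (p : ℤ × ℤ) : halfTurn a b p = (a - p.1, b - p.2) := rfl

lemma halfTurn_symm : (halfTurn a b).symm = halfTurn a b :=
  Function.Involutive.toPerm_symm _

lemma halfTurn_halfTurn (p : ℤ × ℤ) : halfTurn a b (halfTurn a b p) = p :=
  Function.Involutive.toPerm_involutive _ p

lemma mem_finsetCongr_halfTurn {S : Finset (ℤ × ℤ)} {p : ℤ × ℤ} :
    p ∈ (halfTurn a b).finsetCongr S ↔ halfTurn a b p ∈ S := by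
  rw [Equiv.finsetCongr_apply, mem_map_equiv, halfTurn_symm]

lemma finsetCongr_halfTurn_involutive : Function.Involutive (halfTurn a b).finsetCongr := by
  intro d
  have h := (halfTurn a b).finsetCongr.symm_apply_apply d
  rwa [Equiv.finsetCongr_symm, halfTurn_symm] at h

lemma horiz_finsetCongr_halfTurn (h : Horiz d) : Horiz ((halfTurn a b).finsetCongr d) := by
  obtain ⟨i, j, rfl⟩ := h
  refine ⟨a - i - 1, b - j, ?_⟩
  simp only [Equiv.finsetCongr_apply, map_insert, map_singleton, Equiv.coe_toEmbedding,
    halfTurn_apply]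
  rw [pair_comm, sub_add_cancel, sub_add_eq_sub_sub]

lemma vert_finsetCongr_halfTurn (h : Vert d) : Vert ((halfTurn a b).finsetCongr d) := by
  obtain ⟨i, j, rfl⟩ := h
  refine ⟨a - i, b - j - 1, ?_⟩
  simp only [Equiv.finsetCongr_apply, map_insert, map_singleton, Equiv.coe_toEmbedding,
    halfTurn_apply]
  rw [pair_comm, sub_add_cancel, sub_add_eq_sub_sub]

lemma Scomp_finsetCongr_halfTurn (X : Finset (ℤ × ℤ)) :
    Scomp ((halfTurn a b).finsetCongr X) = Scomp X :=
  Scomp_finsetCongr (halfTurn a b)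
    (fun d => ⟨fun h => finsetCongr_halfTurn_involutive d ▸ horiz_finsetCongr_halfTurn h,
      horiz_finsetCongr_halfTurn⟩)
    (fun d => ⟨fun h => finsetCongr_halfTurn_involutive d ▸ vert_finsetCongr_halfTurn h,
      vert_finsetCongr_halfTurn⟩) X

/-- When the half-turn preserves `X` and fixes the antidiagonal `c`, it exchanges the cells of `X`
above that antidiagonal with those below it. -/
lemma sdiff_lowerRegion_eq_finsetCongr_halfTurn {X T : Finset (ℤ × ℤ)} {c : ℤ}
    (hX : ∀ p ∈ X, halfTurn a b p ∈ X) (hc : a + b = 2 * c) (hT : T ⊆ diagCells X c) :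
    X \ lowerRegion X T c = (halfTurn a b).finsetCongr
      (lowerRegion X ((halfTurn a b).finsetCongr (diagCells X c \ T)) c) := by
  ext p
  have hpT : p ∈ T → p ∈ X ∧ p.1 + p.2 = c := fun h => mem_filter.1 (hT h)
  have hmemX : halfTurn a b p ∈ X ↔ p ∈ X := ⟨fun h => halfTurn_halfTurn p ▸ hX _ h, hX p⟩
  simp only [lowerRegion, diagCells, mem_sdiff, mem_union, mem_filter, mem_finsetCongr_halfTurn,
    halfTurn_halfTurn, hmemX]
  simp only [halfTurn_apply]
  constructor
  · rintro ⟨hpX, hp⟩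
    push Not at hp
    rcases (hp.1 hpX).lt_or_eq with hlt | heq
    · exact Or.inl ⟨hpX, by omega⟩
    · exact Or.inr ⟨⟨hpX, heq.symm⟩, hp.2⟩
  · rintro (⟨hpX, hlt⟩ | ⟨⟨hpX, heq⟩, hpT'⟩)
    · refine ⟨hpX, ?_⟩
      rintro (⟨-, hlt'⟩ | hp)
      · omega
      · have := (hpT hp).2
        omega
    · exact ⟨hpX, by rintro (⟨-, hlt⟩ | hp) <;> [omega; exact hpT' hp]⟩

end HalfTurn

section Rectangle

variable {m n : ℕ}

def diagCell (m n k : ℕ) : ℤ × ℤ := (((m : ℤ) + n) / 2 - k, k)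

lemma diagCell_injective : Function.Injective (diagCell m n) := fun k l h => by
  simpa [diagCell] using congrArg Prod.snd h

lemma YA_eq_lowerRegion (A : Finset ℕ) :
    YA m n A = lowerRegion (rect ((m : ℤ) - 1) ((n : ℤ) - 1)) (A.image (diagCell m n))
      (((m : ℤ) + n) / 2) := by
  ext p
  simp [YA, Yb, lowerRegion, diagCell]

lemma diagCells_rect (hnm : n ≤ m) :
    diagCells (rect ((m : ℤ) - 1) ((n : ℤ) - 1)) (((m : ℤ) + n) / 2) =
      (Icc 1 (n - 1)).image (diagCell m n) := by
  ext ⟨x, y⟩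
  simp only [diagCells, rect, diagCell, mem_filter, mem_product, mem_image, mem_Icc, Prod.mk.injEq]
  constructor
  · rintro ⟨⟨⟨hx1, hx2⟩, hy1, hy2⟩, hxy⟩
    exact ⟨y.toNat, ⟨by omega, by omega⟩, by omega, by omega⟩
  · rintro ⟨k, ⟨hk1, hk2⟩, rfl, rfl⟩
    omega

lemma halfTurn_mem_rect {p : ℤ × ℤ} (hp : p ∈ rect ((m : ℤ) - 1) ((n : ℤ) - 1)) :
    halfTurn m n p ∈ rect ((m : ℤ) - 1) ((n : ℤ) - 1) := by
  simp only [rect, mem_product, mem_Icc, halfTurn_apply] at hp ⊢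
  omega

/-- The source of `n - A^c`: the half-turn sends the diagonal cell in row `k` to the one in
row `n - k`. -/
lemma finsetCongr_halfTurn_diagCells_sdiff (hc : (m : ℤ) + n = 2 * (((m : ℤ) + n) / 2))
    (A : Finset ℕ) :
    (halfTurn m n).finsetCongr ((Icc 1 (n - 1)).image (diagCell m n) \ A.image (diagCell m n)) =
      ((Icc 1 (n - 1) \ A).image (fun i => n - i)).image (diagCell m n) := by
  rw [← image_sdiff _ _ diagCell_injective, Equiv.finsetCongr_apply, map_eq_image, image_image,
    image_image]
  refine image_congr fun k hk => ?_
  have hk := (mem_Icc.1 (mem_sdiff.1 hk).1)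
  simp only [Function.comp_apply, Equiv.coe_toEmbedding, halfTurn_apply, diagCell, Prod.mk.injEq]
  omega

end Rectangle

theorem stmt15_general (m n : ℕ) (hmo : Odd m) (hno : Odd n) (hlt : n < m) :
    Scomp (rect ((m : ℤ) - 1) ((n : ℤ) - 1)) =
      ∑ A ∈ (Finset.Icc 1 (n - 1)).powerset,
        Scomp (YA m n ((Finset.Icc 1 (n - 1) \ A).image (fun i => n - i))) *
          Scomp (YA m n A) := by
  have hc : (m : ℤ) + n = 2 * (((m : ℤ) + n) / 2) := by
    obtain ⟨a, rfl⟩ := hmo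
    obtain ⟨b, rfl⟩ := hno
    push_cast
    omega
  have hdiag := diagCells_rect hlt.le
  rw [Scomp_eq_sum_powerset_diagCells _ (((m : ℤ) + n) / 2), hdiag, powerset_image,
    sum_image (image_injective diagCell_injective).injOn]
  refine sum_congr rfl fun A hA => ?_
  have hT := hdiag ▸ image_subset_image (f := diagCell m n) (mem_powerset.1 hA)
  rw [sdiff_lowerRegion_eq_finsetCongr_halfTurn (fun p => halfTurn_mem_rect) hc hT,
    Scomp_finsetCongr_halfTurn, hdiag, finsetCongr_halfTurn_diagCells_sdiff hc,
    YA_eq_lowerRegion, YA_eq_lowerRegion]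

theorem stmt15 (m n : ℕ) (hmo : Odd m) (hno : Odd n) (hlt : n < m) (hn : 0 < n) :
    Scomp (rect ((m : ℤ) - 1) ((n : ℤ) - 1)) =
      ∑ A ∈ (Finset.Icc 1 (n - 1)).powerset,
        Scomp (YA m n ((Finset.Icc 1 (n - 1) \ A).image (fun i => n - i))) *
          Scomp (YA m n A) :=
  stmt15_general m n hmo hno hlt
end
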